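/- arXiv:2411.02767 — 8 statements merged into one kernel-verified Lean document; each statement's English description precedes it below -/
import Mathlib

section
/- Let 𝒲 and 𝒴 be real normed vector spaces, let A : 𝒲 → 𝒴 and θ : 𝒲 → ℝ be positively homogeneous of degree p > 0, i.e. A(β•w) = β^p • A(w) and θ(β•w) = β^p·θ(w) for all real β ≥ 0 and all w ∈ 𝒲, let L : 𝒴 → ℝ, and let λ ∈ ℝ. Fix r ∈ ℕ and parameters W : Fin r → 𝒲, and set Φ := Σ_{i<r} A(W_i). Assume that A and θ are Fréchet differentiable at each W_j, that L is Fréchet differentiable at Φ, and that W is a first-order stationary point in the block-wise sense: for each j < r, the map w ↦ L(A(w) + Σ_{i≠j} A(W_i)) + λ·θ(w) has zero Fréchet derivative at W_j. Then for every j < r, (D L(Φ))(A(W_j)) = −λ·θ(W_j). -/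
/-- Euler's identity for positively homogeneous differentiable maps. -/
lemma euler_identity {𝒲 𝒴 : Type*} [NormedAddCommGroup 𝒲] [NormedSpace ℝ 𝒲]
    [NormedAddCommGroup 𝒴] [NormedSpace ℝ 𝒴]
    (f : 𝒲 → 𝒴) (p : ℝ)
    (hf : ∀ β : ℝ, 0 ≤ β → ∀ w : 𝒲, f (β • w) = (β ^ p) • f w)
    (w : 𝒲) (hd : DifferentiableAt ℝ f w) :
    fderiv ℝ f w w = p • f w := by
  have hs : HasDerivAt (fun β : ℝ => β • w) w 1 := by
    simpa using (hasDerivAt_id (1 : ℝ)).smul_const w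
  have h1 : HasDerivAt (fun β : ℝ => f (β • w)) (fderiv ℝ f w w) 1 := by
    have hf' : HasFDerivAt f (fderiv ℝ f w) ((1 : ℝ) • w) := by
      simpa [one_smul] using hd.hasFDerivAt
    exact hf'.comp_hasDerivAt (x := (1 : ℝ)) hs
  have h2 : HasDerivAt (fun β : ℝ => (β ^ p) • f w) (p • f w) 1 := by
    have := (Real.hasDerivAt_rpow_const (p := p) (x := (1 : ℝ))
      (Or.inl one_ne_zero)).smul_const (f w)
    simpa [Real.one_rpow] using this
  have heq : (fun β : ℝ => f (β • w)) =ᶠ[nhds (1 : ℝ)] fun β => (β ^ p) • f w := by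
    filter_upwards [eventually_gt_nhds (by norm_num : (0 : ℝ) < 1)] with β hβ
    exact hf β hβ.le w
  exact h1.unique (h2.congr_of_eventuallyEq heq)

/-- At a block-wise first-order stationary point of the regularized objective
`W ↦ L (Σ_j A (W_j)) + λ Σ_j θ (W_j)` built from maps `A`, `θ` that are positively
homogeneous of degree `p > 0`, the derivative identity
`(D L Φ) (A (W_j)) = −λ · θ (W_j)` holds for every block `j`. -/
theorem stationary_point_identity
    {𝒲 𝒴 : Type*} [NormedAddCommGroup 𝒲] [NormedSpace ℝ 𝒲]
    [NormedAddCommGroup 𝒴] [NormedSpace ℝ 𝒴]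
    (A : 𝒲 → 𝒴) (θ : 𝒲 → ℝ) (p : ℝ) (hp : 0 < p)
    (hA : ∀ β : ℝ, 0 ≤ β → ∀ w : 𝒲, A (β • w) = (β ^ p) • A w)
    (hθ : ∀ β : ℝ, 0 ≤ β → ∀ w : 𝒲, θ (β • w) = (β ^ p) * θ w)
    (L : 𝒴 → ℝ) (lam : ℝ) (r : ℕ) (W : Fin r → 𝒲)
    (Φ : 𝒴) (hΦ : Φ = ∑ i, A (W i))
    (hAdiff : ∀ j : Fin r, DifferentiableAt ℝ A (W j))
    (hθdiff : ∀ j : Fin r, DifferentiableAt ℝ θ (W j))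
    (hLdiff : DifferentiableAt ℝ L Φ)
    (hstat : ∀ j : Fin r,
      fderiv ℝ (fun w => L (A w + ∑ i ∈ Finset.univ.erase j, A (W i)) + lam * θ w) (W j) = 0) :
    ∀ j : Fin r, fderiv ℝ L Φ (A (W j)) = -lam * θ (W j) := by
  intro j
  set c : 𝒴 := ∑ i ∈ Finset.univ.erase j, A (W i) with hc
  have hΦ' : A (W j) + c = Φ := by
    rw [hΦ, hc]
    exact Finset.add_sum_erase Finset.univ (fun i => A (W i)) (Finset.mem_univ j)
  have hinner : HasFDerivAt (fun w => A w + c) (fderiv ℝ A (W j)) (W j) :=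
    (hAdiff j).hasFDerivAt.add_const c
  have hcomp : HasFDerivAt (fun w => L (A w + c))
      ((fderiv ℝ L Φ).comp (fderiv ℝ A (W j))) (W j) := by
    refine HasFDerivAt.comp _ ?_ hinner
    rw [show A (W j) + c = Φ from hΦ']
    exact hLdiff.hasFDerivAt
  have hreg : HasFDerivAt (fun w => lam * θ w) (lam • fderiv ℝ θ (W j)) (W j) :=
    (hθdiff j).hasFDerivAt.const_mul lam
  have htot : HasFDerivAt (fun w => L (A w + c) + lam * θ w)
      ((fderiv ℝ L Φ).comp (fderiv ℝ A (W j)) + lam • fderiv ℝ θ (W j)) (W j) :=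
    hcomp.add hreg
  have hzero : (fderiv ℝ L Φ).comp (fderiv ℝ A (W j)) + lam • fderiv ℝ θ (W j) = 0 := by
    rw [← htot.fderiv]
    exact hstat j
  have happ := congrArg (fun T : 𝒲 →L[ℝ] ℝ => T (W j)) hzero
  simp only [ContinuousLinearMap.add_apply, ContinuousLinearMap.comp_apply,
    ContinuousLinearMap.smul_apply, ContinuousLinearMap.zero_apply, smul_eq_mul] at happ
  rw [euler_identity A p hA (W j) (hAdiff j), euler_identity θ p hθ (W j) (hθdiff j),
    map_smul, smul_eq_mul] at happ
  rw [smul_eq_mul] at happ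
  have hp' : p ≠ 0 := ne_of_gt hp
  have h2 : p * ((fderiv ℝ L Φ) (A (W j)) + lam * θ (W j)) = 0 := by
    linear_combination happ
  have key := (mul_eq_zero.mp h2).resolve_left hp'
  linarith
end

section
/- Let V be a real vector space, 𝒲 a type, φ : 𝒲 → V and θ : 𝒲 → ℝ with θ(w) ≥ 0 for all w, and assume the pair (φ, θ) has the balanced scaling property. Define Ω : V → [0, ∞] by Ω(f) = inf over all r ∈ ℕ and W : Fin r → 𝒲 with Σ_{j<r} φ(W_j) = f of Σ_{j<r} θ(W_j), the infimum taken in the extended nonnegative reals and equal to ∞ when no finite family represents f. Then: (a) Ω(β • f) = β · Ω(f) for every real β ≥ 0 and every f ∈ V (with the convention 0·∞ = 0), and (b) Ω(f₁ + f₂) ≤ Ω(f₁) + Ω(f₂) for all f₁, f₂ ∈ V. In particular, Ω is positively homogeneous of degree one and subadditive, hence convex. -/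
open scoped ENNReal

/-- The induced regularizer `Ω(f)`: the infimum, over all widths `r` and parameter
families `W : Fin r → 𝒲` representing `f` as `Σ_j φ (W_j)`, of the total
regularization `Σ_j θ (W_j)`, taken in `ℝ≥0∞` (and `∞` when no finite family
represents `f`). -/
noncomputable def inducedReg {V : Type*} [AddCommGroup V] [Module ℝ V] {𝒲 : Type*}
    (φ : 𝒲 → V) (θ : 𝒲 → ℝ) (f : V) : ℝ≥0∞ :=
  sInf { s : ℝ≥0∞ | ∃ (r : ℕ) (W : Fin r → 𝒲),
    (∑ j, φ (W j)) = f ∧ s = ENNReal.ofReal (∑ j, θ (W j)) }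

section aux

variable {V : Type*} [AddCommGroup V] [Module ℝ V] {𝒲 : Type*}
    (φ : 𝒲 → V) (θ : 𝒲 → ℝ)

lemma inducedReg_zero_aux : inducedReg φ θ (0 : V) = 0 := by
  refine le_antisymm (sInf_le ?_) zero_le
  exact ⟨0, Fin.elim0, by simp, by simp⟩

lemma inducedReg_smul_le (hθ : ∀ w, 0 ≤ θ w)
    (hbal : ∀ β : ℝ, 0 ≤ β → ∀ w : 𝒲, ∃ w2 : 𝒲, φ w2 = β • φ w ∧ θ w2 = β * θ w)
    (β : ℝ) (hβ : 0 ≤ β) (f : V) :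
    inducedReg φ θ (β • f) ≤ ENNReal.ofReal β * inducedReg φ θ f := by
  rcases eq_or_lt_of_le hβ with rfl | hβpos
  · simp [inducedReg_zero_aux]
  unfold inducedReg
  conv_rhs => rw [sInf_eq_iInf']
  rw [ENNReal.mul_iInf_of_ne (by simp [hβpos]) ENNReal.ofReal_ne_top]
  refine le_iInf fun ⟨s, r, W, hW, hs⟩ => ?_
  choose W2 hW2φ hW2θ using fun j => hbal β hβ (W j)
  refine sInf_le ⟨r, W2, ?_, ?_⟩
  · simp only [hW2φ, ← Finset.smul_sum, hW]
  · simp only [hW2θ, ← Finset.mul_sum, hs]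
    rw [ENNReal.ofReal_mul hβ]

end aux

/-- Under nonnegativity of `θ` and the balanced scaling property of the pair `(φ, θ)`,
the induced regularizer is positively homogeneous of degree one and subadditive
(hence convex). -/
theorem inducedReg_posHomogeneous_and_subadditive
    {V : Type*} [AddCommGroup V] [Module ℝ V] {𝒲 : Type*}
    (φ : 𝒲 → V) (θ : 𝒲 → ℝ)
    (hθ : ∀ w, 0 ≤ θ w)
    (hbal : ∀ β : ℝ, 0 ≤ β → ∀ w : 𝒲, ∃ w2 : 𝒲, φ w2 = β • φ w ∧ θ w2 = β * θ w) :
    (∀ β : ℝ, 0 ≤ β → ∀ f : V,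
        inducedReg φ θ (β • f) = ENNReal.ofReal β * inducedReg φ θ f)
    ∧ (∀ f₁ f₂ : V,
        inducedReg φ θ (f₁ + f₂) ≤ inducedReg φ θ f₁ + inducedReg φ θ f₂) := by
  constructor
  · intro β hβ f
    rcases eq_or_lt_of_le hβ with rfl | hβpos
    · simp [inducedReg_zero_aux]
    refine le_antisymm (inducedReg_smul_le φ θ hθ hbal β hβ f) ?_
    have h2 := inducedReg_smul_le φ θ hθ hbal β⁻¹ (by positivity) (β • f)
    rw [smul_smul, inv_mul_cancel₀ hβpos.ne', one_smul] at h2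
    calc ENNReal.ofReal β * inducedReg φ θ f
        ≤ ENNReal.ofReal β * (ENNReal.ofReal β⁻¹ * inducedReg φ θ (β • f)) :=
          mul_le_mul_right h2 _
      _ = inducedReg φ θ (β • f) := by
          rw [← mul_assoc, ← ENNReal.ofReal_mul hβ, mul_inv_cancel₀ hβpos.ne',
            ENNReal.ofReal_one, one_mul]
  · intro f₁ f₂
    unfold inducedReg
    rw [ENNReal.sInf_add]
    refine le_iInf₂ fun a ⟨r₁, W₁, hW₁, ha⟩ => ?_
    rw [add_comm a, ENNReal.sInf_add]
    refine le_iInf₂ fun b ⟨r₂, W₂, hW₂, hb⟩ => ?_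
    rw [add_comm b a]
    refine sInf_le ⟨r₁ + r₂, Fin.append W₁ W₂, ?_, ?_⟩
    · rw [Fin.sum_univ_add]
      simp [Fin.append_left, Fin.append_right, hW₁, hW₂]
    · rw [Fin.sum_univ_add]
      simp only [Fin.append_left, Fin.append_right]
      rw [ENNReal.ofReal_add (Finset.sum_nonneg fun j _ => hθ _)
        (Finset.sum_nonneg fun j _ => hθ _), ha, hb, add_comm]
end

section
/- Let (Ω₀, ℙ) be a probability space, let X : Ω₀ → ℝ^{n_X} and ε : Ω₀ → ℝ^{n_Y} be measurable random vectors in Euclidean spaces such that X and ε are independent, ε is integrable with E[ε] = 0, and let Φ, f* : ℝ^{n_X} → ℝ^{n_Y} be measurable with ‖Φ(X)‖, ‖f*(X)‖ and ‖ε‖ square-integrable. Set Y := Φ(X) + ε. Let R be any real-valued functional on functions ℝ^{n_X} → ℝ^{n_Y} and let λ > 0. If f* satisfies E[½‖Y − f*(X)‖²] + λ·R(f*) ≤ E[½‖Y − Φ(X)‖²] + λ·R(Φ) (in particular if f* is a global minimizer of the regularized population risk f ↦ E[½‖Y − f(X)‖²] + λ·R(f)), then R(f*) ≤ R(Φ).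 -/
open MeasureTheory ProbabilityTheory

/-- Under the well-specified regression model `Y = Φ(X) + ε` with mean-zero noise `ε`
independent of the input `X`, any function `f*` whose regularized population risk is
at most that of `Φ` (in particular, a global minimizer of the regularized population
risk) has regularization value at most that of `Φ`: `R(f*) ≤ R(Φ)`. -/
theorem regularizer_bound_at_optimum
    {Ω₀ : Type*} [MeasurableSpace Ω₀] (P : Measure Ω₀) [IsProbabilityMeasure P]
    {nX nY : ℕ}
    (X : Ω₀ → EuclideanSpace ℝ (Fin nX)) (ε : Ω₀ → EuclideanSpace ℝ (Fin nY))
    (hX : Measurable X) (hε : Measurable ε)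
    (hindep : IndepFun X ε P)
    (hεint : Integrable ε P) (hεmean : (∫ ω, ε ω ∂P) = 0)
    (Φ fstar : EuclideanSpace ℝ (Fin nX) → EuclideanSpace ℝ (Fin nY))
    (hΦm : Measurable Φ) (hfm : Measurable fstar)
    (hΦ2 : Integrable (fun ω => ‖Φ (X ω)‖ ^ 2) P)
    (hf2 : Integrable (fun ω => ‖fstar (X ω)‖ ^ 2) P)
    (hε2 : Integrable (fun ω => ‖ε ω‖ ^ 2) P)
    (R : (EuclideanSpace ℝ (Fin nX) → EuclideanSpace ℝ (Fin nY)) → ℝ)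
    (lam : ℝ) (hlam : 0 < lam)
    (hopt :
      (∫ ω, (1 / 2 : ℝ) * ‖(Φ (X ω) + ε ω) - fstar (X ω)‖ ^ 2 ∂P) + lam * R fstar ≤
        (∫ ω, (1 / 2 : ℝ) * ‖(Φ (X ω) + ε ω) - Φ (X ω)‖ ^ 2 ∂P) + lam * R Φ) :
    R fstar ≤ R Φ := by
  set g : Ω₀ → EuclideanSpace ℝ (Fin nY) := fun ω => Φ (X ω) - fstar (X ω) with hg
  have hΦL2 : MemLp (fun ω => Φ (X ω)) 2 P :=
    (memLp_two_iff_integrable_sq_norm (hΦm.comp hX).aestronglyMeasurable).2 hΦ2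
  have hfL2 : MemLp (fun ω => fstar (X ω)) 2 P :=
    (memLp_two_iff_integrable_sq_norm (hfm.comp hX).aestronglyMeasurable).2 hf2
  have hgL2 : MemLp g 2 P := hΦL2.sub hfL2
  have hgInt : Integrable g P := hgL2.integrable (by norm_num)
  have hg2 : Integrable (fun ω => ‖g ω‖ ^ 2) P :=
    (memLp_two_iff_integrable_sq_norm hgL2.aestronglyMeasurable).1 hgL2
  -- coordinate integrability
  have hgi : ∀ i, Integrable (fun ω => g ω i) P := fun i =>
    ((EuclideanSpace.proj i : EuclideanSpace ℝ (Fin nY) →L[ℝ] ℝ)).integrable_comp hgInt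
  have hεi : ∀ i, Integrable (fun ω => ε ω i) P := fun i =>
    ((EuclideanSpace.proj i : EuclideanSpace ℝ (Fin nY) →L[ℝ] ℝ)).integrable_comp hεint
  have hεmeani : ∀ i, (∫ ω, ε ω i ∂P) = 0 := by
    intro i
    have := ((EuclideanSpace.proj i : EuclideanSpace ℝ (Fin nY) →L[ℝ] ℝ)).integral_comp_comm hεint
    simpa [hεmean] using this
  have hindepi : ∀ i, IndepFun (fun ω => g ω i) (fun ω => ε ω i) P := by
    intro i
    exact hindep.comp ((EuclideanSpace.proj i : EuclideanSpace ℝ (Fin nY) →L[ℝ] ℝ).continuous.measurable.comp (hΦm.sub hfm)) (EuclideanSpace.proj i : EuclideanSpace ℝ (Fin nY) →L[ℝ] ℝ).continuous.measurable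
  have hprodInt : ∀ i : Fin nY, Integrable (fun ω => g ω i * ε ω i) P := fun i =>
    (hindepi i).integrable_mul (hgi i) (hεi i)
  have hinner_eq : ∀ ω, (inner ℝ (g ω) (ε ω) : ℝ) = ∑ i, g ω i * ε ω i := by
    intro ω
    simp [PiLp.inner_apply, RCLike.inner_apply, mul_comm]
  have hinnerInt : Integrable (fun ω => (inner ℝ (g ω) (ε ω) : ℝ)) P := by
    simp only [hinner_eq]
    exact integrable_finset_sum _ (fun i _ => hprodInt i)
  have hcross : (∫ ω, (inner ℝ (g ω) (ε ω) : ℝ) ∂P) = 0 := by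
    simp only [hinner_eq]
    rw [integral_finset_sum _ (fun i _ => hprodInt i)]
    refine Finset.sum_eq_zero fun i _ => ?_
    have := (hindepi i).integral_fun_mul_eq_mul_integral (hgi i).aestronglyMeasurable (hεi i).aestronglyMeasurable
    simpa [hεmeani i] using this
  -- rewrite integrands
  have hLHS : (∫ ω, (1 / 2 : ℝ) * ‖(Φ (X ω) + ε ω) - fstar (X ω)‖ ^ 2 ∂P)
      = (1/2) * (∫ ω, ‖g ω‖ ^ 2 ∂P) + (1/2) * (∫ ω, ‖ε ω‖ ^ 2 ∂P) := by
    have h1 : ∀ ω, (1 / 2 : ℝ) * ‖(Φ (X ω) + ε ω) - fstar (X ω)‖ ^ 2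
        = (1/2) * ‖g ω‖ ^ 2 + (inner ℝ (g ω) (ε ω) : ℝ) + (1/2) * ‖ε ω‖ ^ 2 := by
      intro ω
      have : (Φ (X ω) + ε ω) - fstar (X ω) = g ω + ε ω := by
        simp only [hg]; abel
      rw [this, norm_add_sq_real]; ring
    simp only [h1]
    have hA : Integrable (fun ω => (1/2:ℝ) * ‖g ω‖ ^ 2 + (inner ℝ (g ω) (ε ω) : ℝ)) P :=
      (hg2.const_mul _).add hinnerInt
    have hB : Integrable (fun ω => (1/2:ℝ) * ‖ε ω‖ ^ 2) P := hε2.const_mul _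
    rw [integral_add hA hB, integral_add (hg2.const_mul _) hinnerInt,
        integral_const_mul, integral_const_mul, hcross]
    ring
  have hRHS : (∫ ω, (1 / 2 : ℝ) * ‖(Φ (X ω) + ε ω) - Φ (X ω)‖ ^ 2 ∂P)
      = (1/2) * (∫ ω, ‖ε ω‖ ^ 2 ∂P) := by
    simp only [add_sub_cancel_left]
    rw [integral_const_mul]
  have hnn : 0 ≤ (∫ ω, ‖g ω‖ ^ 2 ∂P) := integral_nonneg fun ω => by positivity
  have : lam * R fstar ≤ lam * R Φ := by
    rw [hLHS, hRHS] at hopt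
    linarith
  exact le_of_mul_le_mul_left this hlam
end

section
/- Let 𝒲 be a type, φ : 𝒲 → (ℝ^{n_X} → ℝ^{n_Y}), and θ : 𝒲 → ℝ with θ(w) ≥ 0 for all w, and assume the pair (φ, θ) has the balanced scaling property. Let q be a probability measure on a measurable space Ω₀, let X : Ω₀ → ℝ^{n_X} and h : Ω₀ → ℝ^{n_Y} be measurable, and assume that for every w ∈ 𝒲 the function ω ↦ ⟪h(ω), φ(w)(X(ω))⟫ is q-integrable (⟪·,·⟫ the Euclidean inner product). Let P ∈ ℝ satisfy: for every w with θ(w) ≤ 1, ∫ ⟪h(ω), φ(w)(X(ω))⟫ dq(ω) ≤ P. Then for every s ∈ ℕ and every V : Fin s → 𝒲, ∫ ⟪h(ω), Σ_{i<s} φ(V_i)(X(ω))⟫ dq(ω) ≤ P · Σ_{i<s} θ(V_i). -/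
open MeasureTheory

/-- Generalized Cauchy–Schwarz inequality for the polar: if `P` upper-bounds
`∫ ⟪h, φ(w)(X)⟫ dq` over all parameters `w` with `θ(w) ≤ 1`, and the pair `(φ, θ)` has
the balanced scaling property with `θ ≥ 0`, then for every finite family `V`,
`∫ ⟪h, Σ_i φ(V_i)(X)⟫ dq ≤ P · Σ_i θ(V_i)`. -/
theorem polar_cauchy_schwarz
    {Ω₀ : Type*} [MeasurableSpace Ω₀] (q : Measure Ω₀) [IsProbabilityMeasure q]
    {nX nY : ℕ} {𝒲 : Type*}
    (φ : 𝒲 → EuclideanSpace ℝ (Fin nX) → EuclideanSpace ℝ (Fin nY))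
    (θ : 𝒲 → ℝ) (hθ : ∀ w, 0 ≤ θ w)
    (hbal : ∀ β : ℝ, 0 ≤ β → ∀ w : 𝒲, ∃ w2 : 𝒲, φ w2 = β • φ w ∧ θ w2 = β * θ w)
    (X : Ω₀ → EuclideanSpace ℝ (Fin nX)) (h : Ω₀ → EuclideanSpace ℝ (Fin nY))
    (hX : Measurable X) (hh : Measurable h)
    (hint : ∀ w : 𝒲, Integrable (fun ω => (inner ℝ (h ω) (φ w (X ω)) : ℝ)) q)
    (P : ℝ)
    (hP : ∀ w : 𝒲, θ w ≤ 1 → (∫ ω, (inner ℝ (h ω) (φ w (X ω)) : ℝ) ∂q) ≤ P) :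
    ∀ (s : ℕ) (V : Fin s → 𝒲),
      (∫ ω, (inner ℝ (h ω) (∑ i, φ (V i) (X ω)) : ℝ) ∂q) ≤ P * ∑ i, θ (V i) := by
  -- scaling of the integral
  have hscale : ∀ (β : ℝ), 0 ≤ β → ∀ (w w2 : 𝒲), φ w2 = β • φ w → θ w2 = β * θ w →
      (∫ ω, (inner ℝ (h ω) (φ w2 (X ω)) : ℝ) ∂q)
        = β * ∫ ω, (inner ℝ (h ω) (φ w (X ω)) : ℝ) ∂q := by
    intro β hβ w w2 hφ hθ2
    have heq : ∀ ω, (inner ℝ (h ω) (φ w2 (X ω)) : ℝ) = β * inner ℝ (h ω) (φ w (X ω)) := by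
      intro ω; rw [hφ]; simp only [Pi.smul_apply]; exact real_inner_smul_right _ _ _
    simp_rw [heq]
    exact integral_const_mul β _
  -- key: per-parameter bound
  have key : ∀ w : 𝒲, (∫ ω, (inner ℝ (h ω) (φ w (X ω)) : ℝ) ∂q) ≤ P * θ w := by
    intro w
    rcases eq_or_lt_of_le (hθ w) with h0 | hpos
    · -- θ w = 0: show integral ≤ 0
      have hI : (∫ ω, (inner ℝ (h ω) (φ w (X ω)) : ℝ) ∂q) ≤ 0 := by
        by_contra hc
        push_neg at hc
        set I := (∫ ω, (inner ℝ (h ω) (φ w (X ω)) : ℝ) ∂q) with hIdef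
        obtain ⟨β, hβnn, hβ⟩ : ∃ β : ℝ, 0 ≤ β ∧ P < β * I := by
          refine ⟨(|P| + 1) / I, by positivity, ?_⟩
          rw [div_mul_cancel₀ _ (ne_of_gt hc)]
          calc P ≤ |P| := le_abs_self P
            _ < |P| + 1 := by linarith
        obtain ⟨w2, hφ2, hθ2⟩ := hbal β hβnn w
        have := hP w2 (by rw [hθ2, ← h0]; simp)
        rw [hscale β hβnn w w2 hφ2 hθ2] at this
        linarith
      rw [← h0, mul_zero]
      exact hI
    · obtain ⟨w2, hφ2, hθ2⟩ := hbal (θ w)⁻¹ (by positivity) w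
      have h1 : θ w2 ≤ 1 := by rw [hθ2, inv_mul_cancel₀ (ne_of_gt hpos)]
      have := hP w2 h1
      rw [hscale _ (by positivity) w w2 hφ2 hθ2] at this
      rw [inv_mul_le_iff₀ hpos] at this
      linarith [this]
  intro s V
  have hsum : (∫ ω, (inner ℝ (h ω) (∑ i, φ (V i) (X ω)) : ℝ) ∂q)
      = ∑ i, ∫ ω, (inner ℝ (h ω) (φ (V i) (X ω)) : ℝ) ∂q := by
    rw [← integral_finset_sum _ (fun i _ => hint (V i))]
    congr 1
    funext ω
    rw [inner_sum]
  rw [hsum, Finset.mul_sum]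
  exact Finset.sum_le_sum fun i _ => key (V i)
end

section
/- Let q be a probability measure on a measurable space Ω₀, and let X : Ω₀ → ℝ^{n_X}, Y : Ω₀ → ℝ^{n_Y} be measurable. Let ℓ : ℝ^{n_Y} × ℝ^{n_Y} → ℝ, G : ℝ^{n_Y} × ℝ^{n_Y} → ℝ^{n_Y} and α ≥ 0 be such that for every y, G(y, ·) is the gradient of ℓ(y, ·) and the α-strong-convexity inequality holds: ℓ(y, ŷ₂) ≥ ℓ(y, ŷ₁) + ⟪G(y, ŷ₁), ŷ₂ − ŷ₁⟫ + (α/2)·‖ŷ₂ − ŷ₁‖² for all y, ŷ₁, ŷ₂. Let 𝒲 be a type, φ : 𝒲 → (ℝ^{n_X} → ℝ^{n_Y}), θ : 𝒲 → ℝ with θ ≥ 0 and the balanced scaling property, and λ > 0. Fix r ∈ ℕ, W : Fin r → 𝒲 and set Φ := Σ_{j<r} φ(W_j) (pointwise sum), and assume the first-order stationarity identities: for every j < r, ∫ ⟪−(1/λ)•G(Y(ω), Φ(X(ω))), φ(W_j)(X(ω))⟫ dq(ω) = θ(W_j). Let f : ℝ^{n_X} → ℝ^{n_Y} admit a factorization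 f = Σ_{i<s} φ(V_i) with total regularization T := Σ_{i<s} θ(V_i), and let P ∈ ℝ be an upper bound for the polar at −(1/λ)•G(Y, Φ(X)): for every w with θ(w) ≤ 1, ∫ ⟪−(1/λ)•G(Y, Φ(X)), φ(w)(X)⟫ dq ≤ P. Assume ω ↦ ℓ(Y(ω), Φ(X(ω))), ω ↦ ℓ(Y(ω), f(X(ω))), ω ↦ ‖f(X(ω)) − Φ(X(ω))‖², and ω ↦ ⟪G(Y(ω), Φ(X(ω))), φ(w)(X(ω))⟫ for every w ∈ 𝒲 are q-integrable. Then: ∫ ℓ(Y, Φ(X)) dq + λ·Σ_{j<r} θ(W_j) ≤ ∫ ℓ(Y, f(X)) dq + λ·T·P − (α/2)·∫ ‖f(X) − Φ(X)‖² dq. -/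
open MeasureTheory

/-- Optimality gap lemma (first part of the paper's Theorem 1): at any stationary
point `W` (in the sense of the stationarity integral identities) of the non-convex
regularized objective, for any factorized comparison function `f = Σ_i φ(V_i)` with
total regularization `T` and any upper bound `P` for the polar of
`−(1/λ)∇ℓ(Y, Φ(X))`, one has
`NC_q(W) ≤ ∫ℓ(Y, f(X))dq + λ·T·P − (α/2)·‖f − Φ‖²_q`. -/
theorem optimality_gap
    {Ω₀ : Type*} [MeasurableSpace Ω₀] (q : Measure Ω₀) [IsProbabilityMeasure q]
    {nX nY : ℕ}
    (X : Ω₀ → EuclideanSpace ℝ (Fin nX)) (Y : Ω₀ → EuclideanSpace ℝ (Fin nY))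
    (hX : Measurable X) (hY : Measurable Y)
    (ℓ : EuclideanSpace ℝ (Fin nY) × EuclideanSpace ℝ (Fin nY) → ℝ)
    (G : EuclideanSpace ℝ (Fin nY) × EuclideanSpace ℝ (Fin nY) → EuclideanSpace ℝ (Fin nY))
    (α : ℝ) (hα : 0 ≤ α)
    (hgrad : ∀ y yh, HasGradientAt (fun z => ℓ (y, z)) (G (y, yh)) yh)
    (hconv : ∀ y y1 y2,
      ℓ (y, y1) + (inner ℝ (G (y, y1)) (y2 - y1) : ℝ) + (α / 2) * ‖y2 - y1‖ ^ 2 ≤ ℓ (y, y2))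
    {𝒲 : Type*}
    (φ : 𝒲 → EuclideanSpace ℝ (Fin nX) → EuclideanSpace ℝ (Fin nY))
    (θ : 𝒲 → ℝ) (hθ : ∀ w, 0 ≤ θ w)
    (hbal : ∀ β : ℝ, 0 ≤ β → ∀ w : 𝒲, ∃ w2 : 𝒲, φ w2 = β • φ w ∧ θ w2 = β * θ w)
    (lam : ℝ) (hlam : 0 < lam)
    (r : ℕ) (W : Fin r → 𝒲)
    (Φ : EuclideanSpace ℝ (Fin nX) → EuclideanSpace ℝ (Fin nY))
    (hΦ : Φ = fun x => ∑ j, φ (W j) x)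
    (hstat : ∀ j : Fin r,
      (∫ ω, (inner ℝ ((-(1 / lam)) • G (Y ω, Φ (X ω))) (φ (W j) (X ω)) : ℝ) ∂q) = θ (W j))
    (f : EuclideanSpace ℝ (Fin nX) → EuclideanSpace ℝ (Fin nY))
    (s : ℕ) (V : Fin s → 𝒲) (hf : f = fun x => ∑ i, φ (V i) x)
    (T : ℝ) (hT : T = ∑ i, θ (V i))
    (P : ℝ)
    (hP : ∀ w : 𝒲, θ w ≤ 1 →
      (∫ ω, (inner ℝ ((-(1 / lam)) • G (Y ω, Φ (X ω))) (φ w (X ω)) : ℝ) ∂q) ≤ P)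
    (hint1 : Integrable (fun ω => ℓ (Y ω, Φ (X ω))) q)
    (hint2 : Integrable (fun ω => ℓ (Y ω, f (X ω))) q)
    (hint3 : Integrable (fun ω => ‖f (X ω) - Φ (X ω)‖ ^ 2) q)
    (hint4 : ∀ w : 𝒲,
      Integrable (fun ω => (inner ℝ (G (Y ω, Φ (X ω))) (φ w (X ω)) : ℝ)) q) :
    (∫ ω, ℓ (Y ω, Φ (X ω)) ∂q) + lam * ∑ j, θ (W j) ≤
      (∫ ω, ℓ (Y ω, f (X ω)) ∂q) + lam * T * P
        - (α / 2) * ∫ ω, ‖f (X ω) - Φ (X ω)‖ ^ 2 ∂q := by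
  set g : Ω₀ → EuclideanSpace ℝ (Fin nY) := fun ω => G (Y ω, Φ (X ω)) with hg
  have hIJ : ∀ w : 𝒲,
      (∫ ω, (inner ℝ ((-(1 / lam)) • g ω) (φ w (X ω)) : ℝ) ∂q)
        = (-(1 / lam)) * ∫ ω, (inner ℝ (g ω) (φ w (X ω)) : ℝ) ∂q := by
    intro w
    rw [← integral_const_mul]
    congr 1; funext ω
    rw [real_inner_smul_left]
  have hscale : ∀ (β : ℝ) (w w2 : 𝒲), φ w2 = β • φ w →
      (∫ ω, (inner ℝ ((-(1 / lam)) • g ω) (φ w2 (X ω)) : ℝ) ∂q)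
        = β * ∫ ω, (inner ℝ ((-(1 / lam)) • g ω) (φ w (X ω)) : ℝ) ∂q := by
    intro β w w2 h
    rw [← integral_const_mul]
    congr 1; funext ω
    rw [h, Pi.smul_apply, real_inner_smul_right]
  -- polar bound for comparison atoms
  have hA : ∀ i : Fin s,
      (∫ ω, (inner ℝ ((-(1 / lam)) • g ω) (φ (V i) (X ω)) : ℝ) ∂q) ≤ θ (V i) * P := by
    intro i
    set I := ∫ ω, (inner ℝ ((-(1 / lam)) • g ω) (φ (V i) (X ω)) : ℝ) ∂q with hI
    rcases eq_or_lt_of_le (hθ (V i)) with h0 | hpos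
    · by_contra hcon
      push_neg at hcon
      rw [← h0, zero_mul] at hcon
      have hP0 : 0 ≤ P := by
        obtain ⟨w2, hφ2, hθ2⟩ := hbal 0 le_rfl (V i)
        have hle := hP w2 (by rw [hθ2, zero_mul]; norm_num)
        rw [hscale 0 (V i) w2 hφ2, zero_mul] at hle
        exact hle
      obtain ⟨w2, hφ2, hθ2⟩ := hbal ((P + 1) / I) (by positivity) (V i)
      have hle := hP w2 (by rw [hθ2, ← h0, mul_zero]; norm_num)
      rw [hscale _ _ _ hφ2, div_mul_cancel₀ _ (ne_of_gt hcon)] at hle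
      linarith
    · obtain ⟨w2, hφ2, hθ2⟩ := hbal (θ (V i))⁻¹ (by positivity) (V i)
      have hle := hP w2 (by rw [hθ2, inv_mul_cancel₀ (ne_of_gt hpos)])
      rw [hscale _ _ _ hφ2] at hle
      rwa [inv_mul_le_iff₀ hpos] at hle
  -- stationarity in terms of J
  have hB : ∀ j : Fin r,
      (∫ ω, (inner ℝ (g ω) (φ (W j) (X ω)) : ℝ) ∂q) = -lam * θ (W j) := by
    intro j
    set Jw := ∫ ω, (inner ℝ (g ω) (φ (W j) (X ω)) : ℝ) ∂q with hJw
    have h2 : -(1 / lam) * Jw = θ (W j) := by rw [← hIJ]; exact hstat j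
    have hl : lam ≠ 0 := ne_of_gt hlam
    field_simp at h2
    linarith
  -- lower bound on J for comparison atoms
  have hC : ∀ i : Fin s,
      θ (V i) * (-(lam * P)) ≤ ∫ ω, (inner ℝ (g ω) (φ (V i) (X ω)) : ℝ) ∂q := by
    intro i
    set Jv := ∫ ω, (inner ℝ (g ω) (φ (V i) (X ω)) : ℝ) ∂q with hJv
    have h : -(1 / lam) * Jv ≤ θ (V i) * P := by rw [← hIJ]; exact hA i
    have h2 := mul_le_mul_of_nonneg_left h (le_of_lt hlam)
    have hl : lam ≠ 0 := ne_of_gt hlam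
    have h3 : lam * (-(1 / lam) * Jv) = -Jv := by field_simp
    rw [h3] at h2
    nlinarith
  -- the inner-product cross term
  have hFdecomp : (fun ω => (inner ℝ (g ω) (f (X ω) - Φ (X ω)) : ℝ))
      = fun ω => (∑ i, (inner ℝ (g ω) (φ (V i) (X ω)) : ℝ))
          - ∑ j, (inner ℝ (g ω) (φ (W j) (X ω)) : ℝ) := by
    funext ω
    rw [inner_sub_right, hf, hΦ]
    simp [inner_sum]
  have hintf : Integrable (fun ω => (∑ i, (inner ℝ (g ω) (φ (V i) (X ω)) : ℝ))) q :=
    integrable_finset_sum _ (fun i _ => hint4 (V i))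
  have hintΦ : Integrable (fun ω => (∑ j, (inner ℝ (g ω) (φ (W j) (X ω)) : ℝ))) q :=
    integrable_finset_sum _ (fun j _ => hint4 (W j))
  have hintF : Integrable (fun ω => (inner ℝ (g ω) (f (X ω) - Φ (X ω)) : ℝ)) q := by
    rw [hFdecomp]; exact hintf.sub hintΦ
  have i12 : Integrable (fun ω => ℓ (Y ω, Φ (X ω))
      + (inner ℝ (g ω) (f (X ω) - Φ (X ω)) : ℝ)) q := hint1.add hintF
  have i3 : Integrable (fun ω => (α / 2) * ‖f (X ω) - Φ (X ω)‖ ^ 2) q := hint3.const_mul _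
  -- strong convexity, integrated
  have key : (∫ ω, ℓ (Y ω, Φ (X ω)) ∂q) + (∫ ω, (inner ℝ (g ω) (f (X ω) - Φ (X ω)) : ℝ) ∂q)
      + (α / 2) * (∫ ω, ‖f (X ω) - Φ (X ω)‖ ^ 2 ∂q) ≤ ∫ ω, ℓ (Y ω, f (X ω)) ∂q := by
    have hmono : (∫ ω, ((ℓ (Y ω, Φ (X ω)) + (inner ℝ (g ω) (f (X ω) - Φ (X ω)) : ℝ))
        + (α / 2) * ‖f (X ω) - Φ (X ω)‖ ^ 2) ∂q) ≤ ∫ ω, ℓ (Y ω, f (X ω)) ∂q := by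
      refine integral_mono (i12.add i3) hint2 ?_
      intro ω
      exact hconv (Y ω) (Φ (X ω)) (f (X ω))
    rw [integral_add i12 i3, integral_add hint1 hintF, integral_const_mul] at hmono
    exact hmono
  -- compute the cross term integral
  have hFval : (∫ ω, (inner ℝ (g ω) (f (X ω) - Φ (X ω)) : ℝ) ∂q)
      = (∑ i, ∫ ω, (inner ℝ (g ω) (φ (V i) (X ω)) : ℝ) ∂q) + lam * ∑ j, θ (W j) := by
    rw [hFdecomp, integral_sub hintf hintΦ, integral_finset_sum _ (fun i _ => hint4 (V i)),
      integral_finset_sum _ (fun j _ => hint4 (W j))]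
    have : (∑ j, ∫ ω, (inner ℝ (g ω) (φ (W j) (X ω)) : ℝ) ∂q) = -lam * ∑ j, θ (W j) := by
      rw [Finset.mul_sum]
      exact Finset.sum_congr rfl (fun j _ => hB j)
    rw [this]; ring
  have hSV : T * (-(lam * P)) ≤ ∑ i, ∫ ω, (inner ℝ (g ω) (φ (V i) (X ω)) : ℝ) ∂q := by
    have h1 : (∑ i, θ (V i) * (-(lam * P)))
        ≤ ∑ i, ∫ ω, (inner ℝ (g ω) (φ (V i) (X ω)) : ℝ) ∂q :=
      Finset.sum_le_sum (fun i _ => hC i)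
    rwa [← Finset.sum_mul, ← hT] at h1
  have hTe : T * (-(lam * P)) = -(lam * T * P) := by ring
  linarith [key, hFval, hSV, hTe]
end

section
/- Let Ω₀ be a measurable space carrying two probability measures q (population) and q_N (empirical), and let X : Ω₀ → ℝ^{n_X}, Y : Ω₀ → ℝ^{n_Y} be measurable. Let ℓ : ℝ^{n_Y} × ℝ^{n_Y} → ℝ, G : ℝ^{n_Y} × ℝ^{n_Y} → ℝ^{n_Y} and α ≥ 0 be such that for every y, G(y, ·) is the gradient of ℓ(y, ·) and ℓ(y, ŷ₂) ≥ ℓ(y, ŷ₁) + ⟪G(y, ŷ₁), ŷ₂ − ŷ₁⟫ + (α/2)·‖ŷ₂ − ŷ₁‖² for all y, ŷ₁, ŷ₂. Let 𝒲 be a type, φ : 𝒲 → (ℝ^{n_X} → ℝ^{n_Y}), θ : 𝒲 → ℝ with θ ≥ 0 and the balanced scaling property, and λ > 0. Fix W : Fin r → 𝒲 with Φ := Σ_{j<r} φ(W_j), and assume the stationarity identities with respect to the empirical measure: for every j, ∫ ⟪−(1/λ)•G(Y, Φ(X)), φ(W_j)(X)⟫ dq_N = θ(W_j). Let f = Σ_{i<s}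 φ(V_i) with T := Σ_{i<s} θ(V_i), and let P ∈ ℝ be an upper bound for the polar with respect to q: for every w with θ(w) ≤ 1, ∫ ⟪−(1/λ)•G(Y, Φ(X)), φ(w)(X)⟫ dq ≤ P. Assume all the relevant integrands (ℓ(Y, Φ(X)), ℓ(Y, f(X)), ‖f(X) − Φ(X)‖², and ⟪G(Y, Φ(X)), φ(w)(X)⟫ for every w ∈ 𝒲) are integrable with respect to both q and q_N. Then: ∫ ℓ(Y, Φ(X)) dq + λ·Σ_{j<r} θ(W_j) ≤ ∫ ℓ(Y, f(X)) dq + λ·T·P − (α/2)·∫ ‖f(X) − Φ(X)‖² dq + ( ∫ ⟪G(Y, Φ(X)), Φ(X)⟫ dq − ∫ ⟪G(Y, Φ(X)), Φ(X)⟫ dq_N ). -/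
open MeasureTheory

/-- Population optimality gap (second part of the paper's Theorem 1): at any
stationary point `W` of the empirical objective (stationarity identities with respect
to the empirical measure `qN`), the population objective is bounded by the population
convex objective of any factorized `f = Σ_i φ(V_i)` plus the polar term and the
population–empirical equilibria gap. -/
theorem population_optimality_gap
    {Ω₀ : Type*} [MeasurableSpace Ω₀]
    (q qN : Measure Ω₀) [IsProbabilityMeasure q] [IsProbabilityMeasure qN]
    {nX nY : ℕ}
    (X : Ω₀ → EuclideanSpace ℝ (Fin nX)) (Y : Ω₀ → EuclideanSpace ℝ (Fin nY))
    (hX : Measurable X) (hY : Measurable Y)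
    (ℓ : EuclideanSpace ℝ (Fin nY) × EuclideanSpace ℝ (Fin nY) → ℝ)
    (G : EuclideanSpace ℝ (Fin nY) × EuclideanSpace ℝ (Fin nY) → EuclideanSpace ℝ (Fin nY))
    (α : ℝ) (hα : 0 ≤ α)
    (hgrad : ∀ y yh, HasGradientAt (fun z => ℓ (y, z)) (G (y, yh)) yh)
    (hconv : ∀ y y1 y2,
      ℓ (y, y1) + (inner ℝ (G (y, y1)) (y2 - y1) : ℝ) + (α / 2) * ‖y2 - y1‖ ^ 2 ≤ ℓ (y, y2))
    {𝒲 : Type*}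
    (φ : 𝒲 → EuclideanSpace ℝ (Fin nX) → EuclideanSpace ℝ (Fin nY))
    (θ : 𝒲 → ℝ) (hθ : ∀ w, 0 ≤ θ w)
    (hbal : ∀ β : ℝ, 0 ≤ β → ∀ w : 𝒲, ∃ w2 : 𝒲, φ w2 = β • φ w ∧ θ w2 = β * θ w)
    (lam : ℝ) (hlam : 0 < lam)
    (r : ℕ) (W : Fin r → 𝒲)
    (Φ : EuclideanSpace ℝ (Fin nX) → EuclideanSpace ℝ (Fin nY))
    (hΦ : Φ = fun x => ∑ j, φ (W j) x)
    (hstat : ∀ j : Fin r,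
      (∫ ω, (inner ℝ ((-(1 / lam)) • G (Y ω, Φ (X ω))) (φ (W j) (X ω)) : ℝ) ∂qN) = θ (W j))
    (f : EuclideanSpace ℝ (Fin nX) → EuclideanSpace ℝ (Fin nY))
    (s : ℕ) (V : Fin s → 𝒲) (hf : f = fun x => ∑ i, φ (V i) x)
    (T : ℝ) (hT : T = ∑ i, θ (V i))
    (P : ℝ)
    (hP : ∀ w : 𝒲, θ w ≤ 1 →
      (∫ ω, (inner ℝ ((-(1 / lam)) • G (Y ω, Φ (X ω))) (φ w (X ω)) : ℝ) ∂q) ≤ P)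
    (hint1 : Integrable (fun ω => ℓ (Y ω, Φ (X ω))) q)
    (hint1N : Integrable (fun ω => ℓ (Y ω, Φ (X ω))) qN)
    (hint2 : Integrable (fun ω => ℓ (Y ω, f (X ω))) q)
    (hint2N : Integrable (fun ω => ℓ (Y ω, f (X ω))) qN)
    (hint3 : Integrable (fun ω => ‖f (X ω) - Φ (X ω)‖ ^ 2) q)
    (hint3N : Integrable (fun ω => ‖f (X ω) - Φ (X ω)‖ ^ 2) qN)
    (hint4 : ∀ w : 𝒲,
      Integrable (fun ω => (inner ℝ (G (Y ω, Φ (X ω))) (φ w (X ω)) : ℝ)) q)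
    (hint4N : ∀ w : 𝒲,
      Integrable (fun ω => (inner ℝ (G (Y ω, Φ (X ω))) (φ w (X ω)) : ℝ)) qN) :
    (∫ ω, ℓ (Y ω, Φ (X ω)) ∂q) + lam * ∑ j, θ (W j) ≤
      (∫ ω, ℓ (Y ω, f (X ω)) ∂q) + lam * T * P
        - (α / 2) * (∫ ω, ‖f (X ω) - Φ (X ω)‖ ^ 2 ∂q)
        + ((∫ ω, (inner ℝ (G (Y ω, Φ (X ω))) (Φ (X ω)) : ℝ) ∂q)
            - ∫ ω, (inner ℝ (G (Y ω, Φ (X ω))) (Φ (X ω)) : ℝ) ∂qN) := by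
  set g : Ω₀ → EuclideanSpace ℝ (Fin nY) := fun ω => G (Y ω, Φ (X ω)) with hg
  -- rewrite scaled inner products
  have hsm : ∀ (ω : Ω₀) (v : EuclideanSpace ℝ (Fin nY)),
      (inner ℝ ((-(1 / lam)) • g ω) v : ℝ) = (-(1 / lam)) * inner ℝ (g ω) v := by
    intro ω v; rw [real_inner_smul_left]
  -- key polar bound per parameter
  have key : ∀ w : 𝒲,
      -(1 / lam) * (∫ ω, (inner ℝ (g ω) (φ w (X ω)) : ℝ) ∂q) ≤ P * θ w := by
    intro w
    have hPl : ∀ w2 : 𝒲, θ w2 ≤ 1 →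
        -(1 / lam) * (∫ ω, (inner ℝ (g ω) (φ w2 (X ω)) : ℝ) ∂q) ≤ P := by
      intro w2 h2
      have h : (∫ ω, (inner ℝ ((-(1 / lam)) • g ω) (φ w2 (X ω)) : ℝ) ∂q) ≤ P := hP w2 h2
      simp only [hsm] at h
      rwa [integral_const_mul _ _] at h
    have hscale : ∀ β : ℝ, 0 ≤ β → β * θ w ≤ 1 →
        -(1 / lam) * (β * ∫ ω, (inner ℝ (g ω) (φ w (X ω)) : ℝ) ∂q) ≤ P := by
      intro β hβ0 hβ1
      obtain ⟨w2, hφ2, hθ2⟩ := hbal β hβ0 w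
      have h := hPl w2 (by rw [hθ2]; exact hβ1)
      have hι : (∫ ω, (inner ℝ (g ω) (φ w2 (X ω)) : ℝ) ∂q)
          = β * ∫ ω, (inner ℝ (g ω) (φ w (X ω)) : ℝ) ∂q := by
        rw [hφ2]
        simp only [Pi.smul_apply, real_inner_smul_right]
        rw [integral_const_mul _ _]
      rwa [hι] at h
    rcases eq_or_lt_of_le (hθ w) with h0 | hpos
    · set c := -(1 / lam) * (∫ ω, (inner ℝ (g ω) (φ w (X ω)) : ℝ) ∂q) with hc
      have hβ : ∀ β : ℝ, 0 ≤ β → β * c ≤ P := by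
        intro β hβ0
        have := hscale β hβ0 (by rw [← h0]; norm_num)
        calc β * c = -(1 / lam) * (β * ∫ ω, (inner ℝ (g ω) (φ w (X ω)) : ℝ) ∂q) := by
              rw [hc]; ring
          _ ≤ P := this
      have hc0 : c ≤ 0 := by
        by_contra hcon
        push_neg at hcon
        have h1 := hβ ((max P 0 + 1) / c) (by positivity)
        rw [div_mul_cancel₀ _ (ne_of_gt hcon)] at h1
        have : P ≤ max P 0 := le_max_left _ _
        linarith
      have h1 := hβ 1 zero_le_one
      rw [← h0, mul_zero]
      linarith
    · obtain ⟨w2, hφ2, hθ2⟩ := hbal (θ w)⁻¹ (by positivity) w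
      have h := hscale (θ w)⁻¹ (by positivity)
        (by rw [inv_mul_cancel₀ (ne_of_gt hpos)])
      have hθne : θ w ≠ 0 := ne_of_gt hpos
      have := mul_le_mul_of_nonneg_left h (le_of_lt hpos)
      calc -(1 / lam) * (∫ ω, (inner ℝ (g ω) (φ w (X ω)) : ℝ) ∂q)
          = θ w * (-(1 / lam) * ((θ w)⁻¹ * ∫ ω, (inner ℝ (g ω) (φ w (X ω)) : ℝ) ∂q)) := by
            field_simp
        _ ≤ θ w * P := this
        _ = P * θ w := by ring
  -- integrability of inner with f and Φ
  have hfpt : ∀ ω, (inner ℝ (g ω) (f (X ω)) : ℝ) = ∑ i, (inner ℝ (g ω) (φ (V i) (X ω)) : ℝ) := by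
    intro ω; rw [hf]; exact inner_sum _ _ _
  have hΦpt : ∀ ω, (inner ℝ (g ω) (Φ (X ω)) : ℝ) = ∑ j, (inner ℝ (g ω) (φ (W j) (X ω)) : ℝ) := by
    intro ω; conv_lhs => rw [hΦ]
    exact inner_sum _ _ _
  have hintf : Integrable (fun ω => (inner ℝ (g ω) (f (X ω)) : ℝ)) q := by
    have : Integrable (fun ω => ∑ i, (inner ℝ (g ω) (φ (V i) (X ω)) : ℝ)) q :=
      integrable_finset_sum _ (fun i _ => hint4 (V i))
    exact this.congr (Filter.Eventually.of_forall fun ω => (hfpt ω).symm)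
  have hintΦ : Integrable (fun ω => (inner ℝ (g ω) (Φ (X ω)) : ℝ)) q := by
    have : Integrable (fun ω => ∑ j, (inner ℝ (g ω) (φ (W j) (X ω)) : ℝ)) q :=
      integrable_finset_sum _ (fun j _ => hint4 (W j))
    exact this.congr (Filter.Eventually.of_forall fun ω => (hΦpt ω).symm)
  have hintΦN : Integrable (fun ω => (inner ℝ (g ω) (Φ (X ω)) : ℝ)) qN := by
    have : Integrable (fun ω => ∑ j, (inner ℝ (g ω) (φ (W j) (X ω)) : ℝ)) qN :=
      integrable_finset_sum _ (fun j _ => hint4N (W j))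
    exact this.congr (Filter.Eventually.of_forall fun ω => (hΦpt ω).symm)
  -- integral of inner with f decomposes
  have hIf : (∫ ω, (inner ℝ (g ω) (f (X ω)) : ℝ) ∂q)
      = ∑ i, ∫ ω, (inner ℝ (g ω) (φ (V i) (X ω)) : ℝ) ∂q := by
    rw [integral_congr_ae (Filter.Eventually.of_forall hfpt)]
    exact integral_finset_sum _ (fun i _ => hint4 (V i))
  -- bound on ∫ ⟨g, f⟩ dq
  have hfbound : -(1 / lam) * (∫ ω, (inner ℝ (g ω) (f (X ω)) : ℝ) ∂q) ≤ P * T := by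
    rw [hIf, hT, Finset.mul_sum, Finset.mul_sum]
    exact Finset.sum_le_sum fun i _ => key (V i)
  have hJ : -(lam * T * P) ≤ ∫ ω, (inner ℝ (g ω) (f (X ω)) : ℝ) ∂q := by
    set J := ∫ ω, (inner ℝ (g ω) (f (X ω)) : ℝ) ∂q with hJdef
    have h2 : lam * (-(1 / lam) * J) = -J := by field_simp
    have h3 := mul_le_mul_of_nonneg_left hfbound hlam.le
    rw [h2] at h3
    linarith
  -- stationarity: empirical inner with Φ
  have hstat' : ∀ j : Fin r, (∫ ω, (inner ℝ (g ω) (φ (W j) (X ω)) : ℝ) ∂qN)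
      = -lam * θ (W j) := by
    intro j
    have h : (∫ ω, (inner ℝ ((-(1 / lam)) • g ω) (φ (W j) (X ω)) : ℝ) ∂qN) = θ (W j) := hstat j
    simp only [hsm] at h
    rw [integral_const_mul _ _] at h
    set I := ∫ ω, (inner ℝ (g ω) (φ (W j) (X ω)) : ℝ) ∂qN with hIdef
    have h2 : lam * (-(1 / lam) * I) = -I := by field_simp
    have h3 : lam * (-(1 / lam) * I) = lam * θ (W j) := by rw [h]
    rw [h2] at h3
    linarith
  have hKN : (∫ ω, (inner ℝ (g ω) (Φ (X ω)) : ℝ) ∂qN) = -lam * ∑ j, θ (W j) := by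
    rw [integral_congr_ae (Filter.Eventually.of_forall hΦpt),
      integral_finset_sum _ (fun j _ => hint4N (W j))]
    rw [Finset.mul_sum]
    exact Finset.sum_congr rfl fun j _ => hstat' j
  -- convexity integrated over q
  have hconvI : (∫ ω, ℓ (Y ω, Φ (X ω)) ∂q)
      + ((∫ ω, (inner ℝ (g ω) (f (X ω)) : ℝ) ∂q) - ∫ ω, (inner ℝ (g ω) (Φ (X ω)) : ℝ) ∂q)
      + (α / 2) * (∫ ω, ‖f (X ω) - Φ (X ω)‖ ^ 2 ∂q)
      ≤ ∫ ω, ℓ (Y ω, f (X ω)) ∂q := by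
    have hpt : ∀ ω, ℓ (Y ω, Φ (X ω))
        + ((inner ℝ (g ω) (f (X ω)) : ℝ) - (inner ℝ (g ω) (Φ (X ω)) : ℝ))
        + (α / 2) * ‖f (X ω) - Φ (X ω)‖ ^ 2 ≤ ℓ (Y ω, f (X ω)) := by
      intro ω
      have h := hconv (Y ω) (Φ (X ω)) (f (X ω))
      rw [inner_sub_right] at h
      exact h
    have hintL : Integrable (fun ω => ℓ (Y ω, Φ (X ω))
        + ((inner ℝ (g ω) (f (X ω)) : ℝ) - (inner ℝ (g ω) (Φ (X ω)) : ℝ))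
        + (α / 2) * ‖f (X ω) - Φ (X ω)‖ ^ 2) q :=
      ((hint1.add (hintf.sub hintΦ)).add (hint3.const_mul _))
    have := integral_mono hintL hint2 hpt
    calc (∫ ω, ℓ (Y ω, Φ (X ω)) ∂q)
        + ((∫ ω, (inner ℝ (g ω) (f (X ω)) : ℝ) ∂q) - ∫ ω, (inner ℝ (g ω) (Φ (X ω)) : ℝ) ∂q)
        + (α / 2) * (∫ ω, ‖f (X ω) - Φ (X ω)‖ ^ 2 ∂q)
        = ∫ ω, (ℓ (Y ω, Φ (X ω))
            + ((inner ℝ (g ω) (f (X ω)) : ℝ) - (inner ℝ (g ω) (Φ (X ω)) : ℝ))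
            + (α / 2) * ‖f (X ω) - Φ (X ω)‖ ^ 2) ∂q := by
          have i1 : Integrable (fun ω => ℓ (Y ω, Φ (X ω))
              + ((inner ℝ (g ω) (f (X ω)) : ℝ) - (inner ℝ (g ω) (Φ (X ω)) : ℝ))) q :=
            hint1.add (hintf.sub hintΦ)
          have i2 : Integrable
              (fun ω => (α / 2) * ‖f (X ω) - Φ (X ω)‖ ^ 2) q := hint3.const_mul _
          have i0 : Integrable (fun ω =>
              (inner ℝ (g ω) (f (X ω)) : ℝ) - (inner ℝ (g ω) (Φ (X ω)) : ℝ)) q :=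
            hintf.sub hintΦ
          rw [integral_add i1 i2, integral_add hint1 i0,
            integral_sub hintf hintΦ, integral_const_mul _ _]
      _ ≤ ∫ ω, ℓ (Y ω, f (X ω)) ∂q := this
  linarith [hconvI, hJ, hKN.ge, hKN.le]
end

section
/- Let q be a probability measure on a measurable space Ω₀, X : Ω₀ → ℝ^{n_X}, Y : Ω₀ → ℝ^{n_Y} measurable, ℓ : ℝ^{n_Y} × ℝ^{n_Y} → ℝ and G : ℝ^{n_Y} × ℝ^{n_Y} → ℝ^{n_Y} such that for every y, G(y, ·) is the gradient of ℓ(y, ·) and ℓ(y, ŷ₂) ≥ ℓ(y, ŷ₁) + ⟪G(y, ŷ₁), ŷ₂ − ŷ₁⟫ for all y, ŷ₁, ŷ₂ (convexity of the loss in its second argument). Let 𝒲 be a type, φ : 𝒲 → (ℝ^{n_X} → ℝ^{n_Y}), θ : 𝒲 → ℝ with θ ≥ 0 and the balanced scaling property, and λ > 0. Fix W : Fin r → 𝒲 with Φ := Σ_{j<r} φ(W_j), assume the stationarity identities ∫ ⟪−(1/λ)•G(Y, Φ(X)), φ(W_j)(X)⟫ dq = θ(W_j) for every j < r, assume all functions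 ω ↦ ℓ(Y(ω), f(X(ω))) for f of the form Σ_{i<s} φ(V_i), ω ↦ ⟪G(Y(ω), Φ(X(ω))), φ(w)(X(ω))⟫ (w ∈ 𝒲) are q-integrable, and assume the polar certificate: ∫ ⟪−(1/λ)•G(Y, Φ(X)), φ(w)(X)⟫ dq ≤ 1 for every w with θ(w) ≤ 1. Then W is a global minimizer of the regularized risk over all network widths: for every r' ∈ ℕ and every W' : Fin r' → 𝒲, ∫ ℓ(Y, Φ(X)) dq + λ·Σ_{j<r} θ(W_j) ≤ ∫ ℓ(Y, Σ_{i<r'} φ(W'_i)(X)) dq + λ·Σ_{i<r'} θ(W'_i). -/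
open MeasureTheory

/-- Global-optimality certificate: at a stationary point `W` of the regularized
non-convex objective with a convex loss, if the polar condition
`Ω°_q(−(1/λ)∇ℓ(Y, Φ(X))) ≤ 1` holds (i.e. the polar certificate below), then `W` is a
global minimizer of the regularized risk over all network widths. -/
theorem global_optimality_certificate
    {Ω₀ : Type*} [MeasurableSpace Ω₀] (q : Measure Ω₀) [IsProbabilityMeasure q]
    {nX nY : ℕ}
    (X : Ω₀ → EuclideanSpace ℝ (Fin nX)) (Y : Ω₀ → EuclideanSpace ℝ (Fin nY))
    (hX : Measurable X) (hY : Measurable Y)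
    (ℓ : EuclideanSpace ℝ (Fin nY) × EuclideanSpace ℝ (Fin nY) → ℝ)
    (G : EuclideanSpace ℝ (Fin nY) × EuclideanSpace ℝ (Fin nY) → EuclideanSpace ℝ (Fin nY))
    (hgrad : ∀ y yh, HasGradientAt (fun z => ℓ (y, z)) (G (y, yh)) yh)
    (hconv : ∀ y y1 y2,
      ℓ (y, y1) + (inner ℝ (G (y, y1)) (y2 - y1) : ℝ) ≤ ℓ (y, y2))
    {𝒲 : Type*}
    (φ : 𝒲 → EuclideanSpace ℝ (Fin nX) → EuclideanSpace ℝ (Fin nY))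
    (θ : 𝒲 → ℝ) (hθ : ∀ w, 0 ≤ θ w)
    (hbal : ∀ β : ℝ, 0 ≤ β → ∀ w : 𝒲, ∃ w2 : 𝒲, φ w2 = β • φ w ∧ θ w2 = β * θ w)
    (lam : ℝ) (hlam : 0 < lam)
    (r : ℕ) (W : Fin r → 𝒲)
    (Φ : EuclideanSpace ℝ (Fin nX) → EuclideanSpace ℝ (Fin nY))
    (hΦ : Φ = fun x => ∑ j, φ (W j) x)
    (hstat : ∀ j : Fin r,
      (∫ ω, (inner ℝ ((-(1 / lam)) • G (Y ω, Φ (X ω))) (φ (W j) (X ω)) : ℝ) ∂q) = θ (W j))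
    (hintℓ : ∀ (s : ℕ) (V : Fin s → 𝒲),
      Integrable (fun ω => ℓ (Y ω, ∑ i, φ (V i) (X ω))) q)
    (hintG : ∀ w : 𝒲,
      Integrable (fun ω => (inner ℝ (G (Y ω, Φ (X ω))) (φ w (X ω)) : ℝ)) q)
    (hpolar : ∀ w : 𝒲, θ w ≤ 1 →
      (∫ ω, (inner ℝ ((-(1 / lam)) • G (Y ω, Φ (X ω))) (φ w (X ω)) : ℝ) ∂q) ≤ 1) :
    ∀ (r' : ℕ) (W' : Fin r' → 𝒲),
      (∫ ω, ℓ (Y ω, Φ (X ω)) ∂q) + lam * ∑ j, θ (W j) ≤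
        (∫ ω, ℓ (Y ω, ∑ i, φ (W' i) (X ω)) ∂q) + lam * ∑ i, θ (W' i) := by
  intro r' W'
  set f : Ω₀ → EuclideanSpace ℝ (Fin nY) := fun ω => G (Y ω, Φ (X ω)) with hf
  set I : 𝒲 → ℝ := fun w => ∫ ω, (inner ℝ (f ω) (φ w (X ω)) : ℝ) ∂q with hI
  -- rewrite the polar/stationarity integrals in terms of I
  have hsmul : ∀ w : 𝒲,
      (∫ ω, (inner ℝ ((-(1 / lam)) • G (Y ω, Φ (X ω))) (φ w (X ω)) : ℝ) ∂q)
        = (-(1 / lam)) * I w := by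
    intro w
    rw [hI]
    rw [← integral_const_mul]
    congr 1
    funext ω
    rw [real_inner_smul_left]
  -- key: for all w, -(1/lam) * I w ≤ θ w
  have key : ∀ w : 𝒲, (-(1 / lam)) * I w ≤ θ w := by
    intro w
    rcases eq_or_lt_of_le (hθ w) with h0 | hpos
    · -- θ w = 0
      by_contra hcon
      push_neg at hcon
      set J := (-(1 / lam)) * I w with hJ
      have hJpos : 0 < J := lt_of_le_of_lt (hθ w) hcon
      obtain ⟨w2, hφ2, hθ2⟩ := hbal (2 / J) (by positivity) w
      have hpol := hpolar w2 (by rw [hθ2, ← h0]; simp)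
      rw [hsmul w2] at hpol
      have hIw2 : I w2 = (2 / J) * I w := by
        rw [hI]
        simp only
        rw [← integral_const_mul]
        congr 1
        funext ω
        rw [hφ2]
        simp only [Pi.smul_apply]
        rw [real_inner_smul_right]
      rw [hIw2] at hpol
      have heq : (-(1 / lam)) * ((2 / J) * I w) = (2 / J) * J := by
        rw [hJ]; ring
      have heq2 : (2 / J) * J = 2 := div_mul_cancel₀ 2 (ne_of_gt hJpos)
      rw [heq, heq2] at hpol
      linarith
    · -- θ w > 0
      obtain ⟨w2, hφ2, hθ2⟩ := hbal (θ w)⁻¹ (by positivity) w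
      have hpol := hpolar w2 (by rw [hθ2]; rw [inv_mul_cancel₀ (ne_of_gt hpos)])
      rw [hsmul w2] at hpol
      have hIw2 : I w2 = (θ w)⁻¹ * I w := by
        rw [hI]
        simp only
        rw [← integral_const_mul]
        congr 1
        funext ω
        rw [hφ2]
        simp only [Pi.smul_apply]
        rw [real_inner_smul_right]
      rw [hIw2] at hpol
      have := mul_le_mul_of_nonneg_left hpol (le_of_lt hpos)
      calc (-(1 / lam)) * I w = θ w * ((-(1 / lam)) * ((θ w)⁻¹ * I w)) := by
            field_simp
        _ ≤ θ w * 1 := mul_le_mul_of_nonneg_left hpol (le_of_lt hpos)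
        _ = θ w := mul_one _
  -- from key: I w ≥ -lam * θ w
  have keyI : ∀ w : 𝒲, -(lam * θ w) ≤ I w := by
    intro w
    have h := key w
    have h2 := mul_le_mul_of_nonneg_left h (le_of_lt hlam)
    have h3 : lam * ((-(1 / lam)) * I w) = -I w := by field_simp
    nlinarith [h2]
  -- stationarity: I (W j) = -lam * θ (W j)
  have statI : ∀ j : Fin r, I (W j) = -(lam * θ (W j)) := by
    intro j
    have h := hstat j
    rw [hsmul] at h
    have hlam' : lam ≠ 0 := ne_of_gt hlam
    field_simp at h
    linarith [h]
  -- integrability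
  have hΦint : Integrable (fun ω => ℓ (Y ω, Φ (X ω))) q := by
    have := hintℓ r W
    simpa [hΦ] using this
  have hΦ'int : Integrable (fun ω => ℓ (Y ω, ∑ i, φ (W' i) (X ω))) q := hintℓ r' W'
  have hg1 : Integrable (fun ω => ∑ i, (inner ℝ (f ω) (φ (W' i) (X ω)) : ℝ)) q :=
    integrable_finset_sum _ (fun i _ => hintG (W' i))
  have hg2 : Integrable (fun ω => ∑ j, (inner ℝ (f ω) (φ (W j) (X ω)) : ℝ)) q :=
    integrable_finset_sum _ (fun j _ => hintG (W j))
  -- pointwise convexity inequality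
  have hpt : ∀ ω, ℓ (Y ω, Φ (X ω))
      + ((∑ i, (inner ℝ (f ω) (φ (W' i) (X ω)) : ℝ))
        - ∑ j, (inner ℝ (f ω) (φ (W j) (X ω)) : ℝ))
      ≤ ℓ (Y ω, ∑ i, φ (W' i) (X ω)) := by
    intro ω
    have h := hconv (Y ω) (Φ (X ω)) (∑ i, φ (W' i) (X ω))
    have hinner : (inner ℝ (f ω) ((∑ i, φ (W' i) (X ω)) - Φ (X ω)) : ℝ)
        = (∑ i, (inner ℝ (f ω) (φ (W' i) (X ω)) : ℝ))
          - ∑ j, (inner ℝ (f ω) (φ (W j) (X ω)) : ℝ) := by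
      rw [inner_sub_right, inner_sum, hΦ]
      simp [inner_sum]
    rw [← hinner]
    exact h
  -- integrate
  have hmono : (∫ ω, (ℓ (Y ω, Φ (X ω))
      + ((∑ i, (inner ℝ (f ω) (φ (W' i) (X ω)) : ℝ))
        - ∑ j, (inner ℝ (f ω) (φ (W j) (X ω)) : ℝ))) ∂q)
      ≤ ∫ ω, ℓ (Y ω, ∑ i, φ (W' i) (X ω)) ∂q := by
    apply integral_mono (hΦint.add (hg1.sub hg2)) hΦ'int
    intro ω
    exact hpt ω
  have hsplit : (∫ ω, (ℓ (Y ω, Φ (X ω))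
      + ((∑ i, (inner ℝ (f ω) (φ (W' i) (X ω)) : ℝ))
        - ∑ j, (inner ℝ (f ω) (φ (W j) (X ω)) : ℝ))) ∂q)
      = (∫ ω, ℓ (Y ω, Φ (X ω)) ∂q) + ((∑ i, I (W' i)) - ∑ j, I (W j)) := by
    have hg12 : Integrable (fun ω => (∑ i, (inner ℝ (f ω) (φ (W' i) (X ω)) : ℝ))
        - ∑ j, (inner ℝ (f ω) (φ (W j) (X ω)) : ℝ)) q := hg1.sub hg2
    rw [integral_add hΦint hg12, integral_sub hg1 hg2,
      integral_finset_sum _ (fun i _ => hintG (W' i)),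
      integral_finset_sum _ (fun j _ => hintG (W j))]
  rw [hsplit] at hmono
  have hsum1 : ∑ j, I (W j) = -(lam * ∑ j, θ (W j)) := by
    rw [Finset.mul_sum, ← Finset.sum_neg_distrib]
    exact Finset.sum_congr rfl (fun j _ => statI j)
  have hsum2 : -(lam * ∑ i, θ (W' i)) ≤ ∑ i, I (W' i) := by
    rw [Finset.mul_sum, ← Finset.sum_neg_distrib]
    exact Finset.sum_le_sum (fun i _ => keyI (W' i))
  linarith [hmono, hsum2]
end

section
/- Let n ≥ 1 and let x be a random vector in Euclidean ℝ^n with law γ_n (independent N(0, 1/n) coordinates). Let g ≥ 1 and let P_g be the Euclidean projection onto the closed ball of radius g. Let m, r, r' ≥ 1, U₁, U₂ ∈ ℝ^{m×r}, V₁, V₂ ∈ ℝ^{n×r}, U₁', U₂' ∈ ℝ^{m×r'}, V₁', V₂' ∈ ℝ^{n×r'}, and write [u]₊ for the componentwise ReLU. Then: | E[ ⟪U₁[V₁ᵀP_g(x)]₊ − U₂[V₂ᵀP_g(x)]₊, U₁'[V₁'ᵀP_g(x)]₊ − U₂'[V₂'ᵀP_g(x)]₊⟫ − ⟪U₁[V₁ᵀx]₊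 − U₂[V₂ᵀx]₊, U₁'[V₁'ᵀx]₊ − U₂'[V₂'ᵀx]₊⟫ ] | ≤ g·exp(−g²/2)·( ‖U₁‖_F·‖V₁‖_F + ‖U₂‖_F·‖V₂‖_F )·( ‖U₁'‖_F·‖V₁'‖_F + ‖U₂'‖_F·‖V₂'‖_F ), where ⟪·,·⟫ is the Euclidean inner product on ℝ^m. -/
open MeasureTheory ProbabilityTheory

/-- The Gaussian law `γ_n` on `ℝ^n` with independent `N(0, 1/n)` coordinates. -/
noncomputable def gaussianVec (n : ℕ) : Measure (Fin n → ℝ) :=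
  Measure.pi fun _ => gaussianReal 0 (n : NNReal)⁻¹

/-- The Euclidean norm on `Fin n → ℝ`. -/
noncomputable def euclNorm {n : ℕ} (z : Fin n → ℝ) : ℝ :=
  Real.sqrt (∑ k, z k ^ 2)

/-- Euclidean projection onto the closed ball of radius `g`. -/
noncomputable def ballProj {n : ℕ} (g : ℝ) (z : Fin n → ℝ) : Fin n → ℝ :=
  if euclNorm z ≤ g then z else (g / euclNorm z) • z

/-- Frobenius norm of a matrix. -/
noncomputable def frobNorm {m n : ℕ} (A : Fin m → Fin n → ℝ) : ℝ :=
  Real.sqrt (∑ i, ∑ j, A i j ^ 2)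

/-- The two-layer ReLU network map `x ↦ U [Vᵀ x]₊` (componentwise ReLU). -/
noncomputable def reluLayer {m n r : ℕ} (U : Fin m → Fin r → ℝ)
    (V : Fin n → Fin r → ℝ) (x : Fin n → ℝ) : Fin m → ℝ :=
  fun k => ∑ j, U k j * max (∑ i, V i j * x i) 0

section Aux
open Real Set Filter
open scoped ENNReal NNReal

lemma myexp_deriv (z : ℝ) : HasDerivAt (fun z : ℝ => -(z * Real.exp (-z^2/2)))
    ((z^2 - 1) * Real.exp (-z^2/2)) z := by
  have h1 : HasDerivAt (fun z : ℝ => -z^2/2) (-z) z := by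
    have h := (((hasDerivAt_pow 2 z).div_const 2).neg)
    norm_num at h
    have heq : (fun x : ℝ => -(x ^ 2 / 2)) = (fun z : ℝ => -z^2/2) := by funext t; ring
    refine h.congr_of_eventuallyEq (Filter.Eventually.of_forall fun t => ?_)
    simp only [Pi.neg_apply]; ring
  have h2 := h1.exp
  have h3 := (hasDerivAt_id z).mul h2
  refine (h3.neg.congr_deriv ?_).congr_of_eventuallyEq (Filter.Eventually.of_forall fun t => ?_)
  · simp only [id]; ring
  · simp only [Pi.neg_apply, Pi.mul_apply, id]

lemma tail_integrable : Integrable (fun z : ℝ => (z^2 - 1) * Real.exp (-z^2/2)) := by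
  have h1 : Integrable (fun z : ℝ => z ^ (2:ℝ) * Real.exp (-(1/2) * z^2)) :=
    integrable_rpow_mul_exp_neg_mul_sq (by norm_num) (by norm_num)
  have h2 : Integrable (fun z : ℝ => Real.exp (-(1/2) * z^2)) :=
    integrable_exp_neg_mul_sq (by norm_num)
  refine (h1.sub h2).congr (Filter.Eventually.of_forall fun z => ?_)
  simp only [Pi.sub_apply, Real.rpow_two]
  ring_nf

lemma ftc_tail {g : ℝ} (hg : 0 < g) :
    ∫ z in Set.Ioi g, (z^2 - 1) * Real.exp (-z^2/2) = g * Real.exp (-g^2/2) := by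
  have htend : Tendsto (fun z : ℝ => -(z * Real.exp (-z^2/2))) atTop (nhds 0) := by
    have h0 := (rpow_mul_exp_neg_mul_sq_isLittleO_exp_neg (by norm_num : (0:ℝ) < 1/2) 1)
    have hexp : Tendsto (fun x : ℝ => Real.exp (-(1/2) * x)) atTop (nhds 0) := by
      have := Real.tendsto_exp_neg_atTop_nhds_zero.comp
        (Filter.tendsto_id.const_mul_atTop (by norm_num : (0:ℝ) < 1/2))
      refine this.congr fun x => ?_
      simp [Function.comp, neg_mul]
    have h1 := h0.tendsto_zero_of_tendsto hexp
    have h2 : Tendsto (fun z : ℝ => z * Real.exp (-z^2/2)) atTop (nhds 0) := by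
      refine h1.congr' ?_
      filter_upwards [Filter.eventually_ge_atTop (0:ℝ)] with z hz
      rw [Real.rpow_one]
      ring_nf
    simpa using h2.neg
  have h := integral_Ioi_of_hasDerivAt_of_tendsto' (a := g)
    (f := fun z => -(z * Real.exp (-z^2/2)))
    (f' := fun z => (z^2 - 1) * Real.exp (-z^2/2)) (m := 0)
    (fun x _ => myexp_deriv x) tail_integrable.integrableOn htend
  rw [h]
  ring


lemma pdf_meas : Measurable (fun z : ℝ => (gaussianPDFReal 0 1 z).toNNReal) :=
  (measurable_gaussianPDFReal 0 1).real_toNNReal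

lemma gauss01_eq (f : ℝ → ℝ) :
    ∫ z, f z ∂(gaussianReal 0 1) = ∫ z, gaussianPDFReal 0 1 z * f z := by
  rw [gaussianReal_of_var_ne_zero 0 one_ne_zero]
  rw [show gaussianPDF 0 1 = fun z => ((gaussianPDFReal 0 1 z).toNNReal : ℝ≥0∞) from rfl]
  rw [integral_withDensity_eq_integral_smul pdf_meas f]
  congr 1; funext z
  simp [NNReal.smul_def, Real.coe_toNNReal _ (gaussianPDFReal_nonneg 0 1 z)]

lemma gauss01_integrable_iff (f : ℝ → ℝ) :
    Integrable f (gaussianReal 0 1) ↔ Integrable (fun z => gaussianPDFReal 0 1 z * f z) := by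
  rw [gaussianReal_of_var_ne_zero 0 one_ne_zero]
  rw [show gaussianPDF 0 1 = fun z => ((gaussianPDFReal 0 1 z).toNNReal : ℝ≥0∞) from rfl]
  rw [integrable_withDensity_iff_integrable_smul pdf_meas]
  constructor <;> intro h <;> refine h.congr (Filter.Eventually.of_forall fun z => ?_) <;>
    simp [NNReal.smul_def, Real.coe_toNNReal _ (gaussianPDFReal_nonneg 0 1 z)]

lemma pdf01_eq (z : ℝ) :
    gaussianPDFReal 0 1 z = (Real.sqrt (2*π))⁻¹ * Real.exp (-z^2/2) := by
  simp [gaussianPDFReal]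

lemma sq_exp_integrable : Integrable (fun z : ℝ => z^2 * Real.exp (-z^2/2)) := by
  have h1 : Integrable (fun z : ℝ => z ^ (2:ℝ) * Real.exp (-(1/2) * z^2)) :=
    integrable_rpow_mul_exp_neg_mul_sq (by norm_num) (by norm_num)
  refine h1.congr (Filter.Eventually.of_forall fun z => ?_)
  simp only [Real.rpow_two]
  ring_nf

lemma one_dim_integrable (g : ℝ) :
    Integrable (fun z => max (z^2 - g^2) 0) (gaussianReal 0 1) := by
  rw [gauss01_integrable_iff]
  refine (sq_exp_integrable.const_mul ((Real.sqrt (2*π))⁻¹)).mono' ?_ ?_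
  · refine AEStronglyMeasurable.mul ?_ ?_
    · exact (measurable_gaussianPDFReal 0 1).aestronglyMeasurable
    · exact (((measurable_id.pow_const 2).sub_const (g^2)).max measurable_const).aestronglyMeasurable
  · refine Filter.Eventually.of_forall fun z => ?_
    have hpdf := gaussianPDFReal_nonneg 0 1 z
    have h0 : max (z^2 - g^2) 0 ≤ z^2 := by
      refine max_le (by nlinarith [sq_nonneg g]) (sq_nonneg z)
    have h1 : (0:ℝ) ≤ max (z^2 - g^2) 0 := le_max_right _ _
    rw [Real.norm_eq_abs, abs_of_nonneg (mul_nonneg hpdf h1), pdf01_eq]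
    have he : (0:ℝ) < Real.exp (-z^2/2) := Real.exp_pos _
    have hc : (0:ℝ) ≤ (Real.sqrt (2*π))⁻¹ := by positivity
    calc (Real.sqrt (2*π))⁻¹ * Real.exp (-z^2/2) * max (z^2 - g^2) 0
        ≤ (Real.sqrt (2*π))⁻¹ * Real.exp (-z^2/2) * z^2 := by
          exact mul_le_mul_of_nonneg_left h0 (by positivity)
      _ = (Real.sqrt (2*π))⁻¹ * (z^2 * Real.exp (-z^2/2)) := by ring

lemma two_le_sqrt_two_pi : (2:ℝ) ≤ Real.sqrt (2*π) := by
  nlinarith [Real.sq_sqrt (by positivity : (0:ℝ) ≤ 2*π), Real.sqrt_nonneg (2*π),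
    Real.pi_gt_three]

lemma one_dim_bound {g : ℝ} (hg : 1 ≤ g) :
    ∫ z, max (z^2 - g^2) 0 ∂(gaussianReal 0 1) ≤ g * Real.exp (-g^2/2) := by
  have hg0 : (0:ℝ) < g := lt_of_lt_of_le one_pos hg
  rw [gauss01_eq]
  set c : ℝ := (Real.sqrt (2*π))⁻¹ with hc
  have hc0 : 0 < c := by positivity
  set S : Set ℝ := Iio (-g) ∪ Ioi g with hS
  have hSmeas : MeasurableSet S := (measurableSet_Iio).union (measurableSet_Ioi)
  set h : ℝ → ℝ := fun z => c * ((z^2 - 1) * Real.exp (-z^2/2)) with hh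
  have hHint : Integrable (S.indicator h) := (tail_integrable.const_mul c).indicator hSmeas
  have hmono : ∀ z, gaussianPDFReal 0 1 z * max (z^2 - g^2) 0 ≤ S.indicator h z := by
    intro z
    by_cases hzS : z ∈ S
    · rw [Set.indicator_of_mem hzS, pdf01_eq, hh]
      have hz2 : g^2 ≤ z^2 := by
        rcases hzS with hz | hz
        · simp only [mem_Iio] at hz; nlinarith
        · simp only [mem_Ioi] at hz; nlinarith
      have hmax : max (z^2 - g^2) 0 = z^2 - g^2 := max_eq_left (by linarith)
      rw [hmax]
      have : z^2 - g^2 ≤ z^2 - 1 := by nlinarith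
      have he : (0:ℝ) < Real.exp (-z^2/2) := Real.exp_pos _
      nlinarith [mul_le_mul_of_nonneg_left this (mul_pos hc0 he).le]
    · rw [Set.indicator_of_notMem hzS]
      have hz : -g ≤ z ∧ z ≤ g := by
        simp only [hS, Set.mem_union, mem_Iio, mem_Ioi, not_or, not_lt] at hzS
        exact hzS
      have : z^2 ≤ g^2 := by nlinarith [hz.1, hz.2]
      rw [max_eq_right (by linarith)]
      simp
  have hint := integral_mono_of_nonneg
    (Filter.Eventually.of_forall fun z =>
      mul_nonneg (gaussianPDFReal_nonneg 0 1 z) (le_max_right _ _))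
    hHint (Filter.Eventually.of_forall hmono)
  rw [integral_indicator hSmeas] at hint
  have hdisj : Disjoint (Iio (-g)) (Ioi g) := by
    rw [Set.disjoint_left]
    intro a ha ha'
    simp only [mem_Iio] at ha
    simp only [mem_Ioi] at ha'
    linarith
  rw [hS, setIntegral_union hdisj measurableSet_Ioi
    ((tail_integrable.const_mul c).integrableOn)
    ((tail_integrable.const_mul c).integrableOn)] at hint
  have hIoi : ∫ z in Ioi g, h z = c * (g * Real.exp (-g^2/2)) := by
    rw [hh, integral_const_mul, ftc_tail hg0]
  have hIio : ∫ z in Iio (-g), h z = c * (g * Real.exp (-g^2/2)) := by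
    have h1 : ∫ z in Iio (-g), h z = ∫ z in Iic (-g), h z :=
      setIntegral_congr_set Iio_ae_eq_Iic
    have h2 : ∫ z in Iic (-g), h z = ∫ z in Iic (-g), h (-z) := by
      refine setIntegral_congr_fun measurableSet_Iic fun z _ => ?_
      rw [hh]; ring_nf
    rw [h1, h2, integral_comp_neg_Iic, neg_neg, hIoi]
  rw [hIio, hIoi] at hint
  refine le_trans hint ?_
  have h2c : 2 * c ≤ 1 := by
    rw [hc]
    rw [show (1:ℝ) = Real.sqrt (2*π) * (Real.sqrt (2*π))⁻¹ by
      rw [mul_inv_cancel₀]; positivity]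
    exact mul_le_mul_of_nonneg_right two_le_sqrt_two_pi (by positivity)
  have hge : (0:ℝ) ≤ g * Real.exp (-g^2/2) := by positivity
  nlinarith


lemma pi_map_eval {n : ℕ} (μ : Fin n → Measure ℝ) [∀ i, IsProbabilityMeasure (μ i)] (i : Fin n) :
    (Measure.pi μ).map (Function.eval i) = μ i := by
  ext s hs
  rw [Measure.map_apply (measurable_pi_apply i) hs]
  have hpre : (fun f : Fin n → ℝ => f i) ⁻¹' s
      = Set.pi Set.univ (Function.update (fun _ => Set.univ) i s) := Set.eval_preimage
  rw [hpre]
  rw [Measure.pi_pi]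
  rw [Finset.prod_eq_single i (fun j _ hj => by
    rw [Function.update_of_ne hj]; exact measure_univ) (fun h => absurd (Finset.mem_univ i) h)]
  rw [Function.update_self]

lemma integral_eval {n : ℕ} (μ : Fin n → Measure ℝ) [∀ i, IsProbabilityMeasure (μ i)] (i : Fin n)
    (h : ℝ → ℝ) (hm : AEStronglyMeasurable h (μ i)) :
    ∫ x, h (x i) ∂Measure.pi μ = ∫ t, h t ∂(μ i) := by
  conv_rhs => rw [← pi_map_eval μ i]
  rw [integral_map (measurable_pi_apply i).aemeasurable (by rwa [pi_map_eval])]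

lemma integrable_eval {n : ℕ} (μ : Fin n → Measure ℝ) [∀ i, IsProbabilityMeasure (μ i)]
    (i : Fin n) (h : ℝ → ℝ) (hi : Integrable h (μ i)) :
    Integrable (fun x => h (x i)) (Measure.pi μ) := by
  have hm : AEStronglyMeasurable h ((Measure.pi μ).map (Function.eval i)) := by
    rw [pi_map_eval]; exact hi.aestronglyMeasurable
  have := (integrable_map_measure hm (measurable_pi_apply i).aemeasurable).mp
    (by rwa [pi_map_eval])
  exact this

lemma gauss_var_map {n : ℕ} (hn : 1 ≤ n) :
    (gaussianReal 0 1).map (fun z => (Real.sqrt n)⁻¹ * z) = gaussianReal 0 (n : NNReal)⁻¹ := by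
  have hn0 : (0:ℝ) < n := by exact_mod_cast hn
  have := gaussianReal_map_const_mul (μ := 0) (v := 1) ((Real.sqrt n)⁻¹)
  rw [show (fun z : ℝ => (Real.sqrt n)⁻¹ * z) = ((Real.sqrt n)⁻¹ * ·) from rfl, this]
  congr 1
  · ring
  · ext
    push_cast
    rw [inv_pow, Real.sq_sqrt hn0.le]
    simp

lemma one_dim_n_integrable {n : ℕ} (hn : 1 ≤ n) (g : ℝ) :
    Integrable (fun t => max ((n:ℝ) * t^2 - g^2) 0) (gaussianReal 0 (n : NNReal)⁻¹) := by
  have hn0 : (0:ℝ) < n := by exact_mod_cast hn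
  rw [← gauss_var_map hn]
  have hmeas : AEStronglyMeasurable (fun t : ℝ => max ((n:ℝ) * t^2 - g^2) 0)
      ((gaussianReal 0 1).map (fun z => (Real.sqrt n)⁻¹ * z)) :=
    (by fun_prop : Measurable fun t : ℝ => max ((n:ℝ) * t^2 - g^2) 0).aestronglyMeasurable
  rw [integrable_map_measure hmeas (by fun_prop : Measurable fun z : ℝ => (Real.sqrt n)⁻¹ * z).aemeasurable]
  refine (one_dim_integrable g).congr (Filter.Eventually.of_forall fun z => ?_)
  simp only [Function.comp]
  rw [mul_pow, inv_pow, Real.sq_sqrt hn0.le, ← mul_assoc, mul_inv_cancel₀ (ne_of_gt hn0), one_mul]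

lemma one_dim_n_bound {n : ℕ} (hn : 1 ≤ n) {g : ℝ} (hg : 1 ≤ g) :
    ∫ t, max ((n:ℝ) * t^2 - g^2) 0 ∂(gaussianReal 0 (n : NNReal)⁻¹) ≤ g * Real.exp (-g^2/2) := by
  have hn0 : (0:ℝ) < n := by exact_mod_cast hn
  rw [← gauss_var_map hn]
  rw [integral_map (by fun_prop : Measurable fun z : ℝ => (Real.sqrt n)⁻¹ * z).aemeasurable
    (by fun_prop : Measurable fun t : ℝ => max ((n:ℝ) * t^2 - g^2) 0).aestronglyMeasurable]
  have : ∀ z : ℝ, max ((n:ℝ) * ((Real.sqrt n)⁻¹ * z)^2 - g^2) 0 = max (z^2 - g^2) 0 := by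
    intro z
    rw [mul_pow, inv_pow, Real.sq_sqrt hn0.le, ← mul_assoc, mul_inv_cancel₀ (ne_of_gt hn0), one_mul]
  simp only [this]
  exact one_dim_bound hg

lemma frobNorm_nonneg {m n : ℕ} (A : Fin m → Fin n → ℝ) : 0 ≤ frobNorm A :=
  Real.sqrt_nonneg _

lemma frobNorm_sq {m n : ℕ} (A : Fin m → Fin n → ℝ) :
    frobNorm A ^ 2 = ∑ i, ∑ j, A i j ^ 2 :=
  Real.sq_sqrt (Finset.sum_nonneg fun i _ => Finset.sum_nonneg fun j _ => sq_nonneg _)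

lemma reluLayer_smul {m n r : ℕ} (U : Fin m → Fin r → ℝ) (V : Fin n → Fin r → ℝ)
    (x : Fin n → ℝ) {c : ℝ} (hc : 0 ≤ c) (k : Fin m) :
    reluLayer U V (fun i => c * x i) k = c * reluLayer U V x k := by
  unfold reluLayer
  rw [Finset.mul_sum]
  refine Finset.sum_congr rfl fun j _ => ?_
  have h1 : ∑ i, V i j * (c * x i) = c * ∑ i, V i j * x i := by
    rw [Finset.mul_sum]; exact Finset.sum_congr rfl fun i _ => by ring
  rw [h1]
  have h2 : max (c * ∑ i, V i j * x i) 0 = c * max (∑ i, V i j * x i) 0 := by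
    rcases le_total (∑ i, V i j * x i) 0 with h | h
    · rw [max_eq_right h, max_eq_right (by nlinarith), mul_zero]
    · rw [max_eq_left h, max_eq_left (by nlinarith)]
  rw [h2]; ring

lemma reluLayer_sq_bound {m n r : ℕ} (U : Fin m → Fin r → ℝ) (V : Fin n → Fin r → ℝ)
    (x : Fin n → ℝ) :
    ∑ k, (reluLayer U V x k)^2
      ≤ (frobNorm U)^2 * (frobNorm V)^2 * (∑ i, x i ^ 2) := by
  rw [frobNorm_sq, frobNorm_sq]
  have hstep : ∀ k, (reluLayer U V x k)^2
      ≤ (∑ j, U k j ^ 2) * ((∑ i, ∑ j, V i j ^ 2) * (∑ i, x i ^ 2)) := by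
    intro k
    have h1 : (reluLayer U V x k)^2
        ≤ (∑ j, U k j ^ 2) * (∑ j, (max (∑ i, V i j * x i) 0)^2) :=
      Finset.sum_mul_sq_le_sq_mul_sq _ _ _
    have h2 : ∑ j, (max (∑ i, V i j * x i) 0)^2
        ≤ (∑ i, ∑ j, V i j ^ 2) * (∑ i, x i ^ 2) := by
      have h3 : ∀ j, (max (∑ i, V i j * x i) 0)^2 ≤ (∑ i, V i j ^ 2) * (∑ i, x i ^ 2) := by
        intro j
        have h4 : (max (∑ i, V i j * x i) 0)^2 ≤ (∑ i, V i j * x i)^2 := by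
          rcases le_total (∑ i, V i j * x i) 0 with h | h
          · rw [max_eq_right h]; simpa using sq_nonneg (∑ i, V i j * x i)
          · rw [max_eq_left h]
        exact h4.trans (Finset.sum_mul_sq_le_sq_mul_sq _ _ _)
      calc ∑ j, (max (∑ i, V i j * x i) 0)^2
          ≤ ∑ j, (∑ i, V i j ^ 2) * (∑ i, x i ^ 2) := Finset.sum_le_sum fun j _ => h3 j
        _ = (∑ j, ∑ i, V i j ^ 2) * (∑ i, x i ^ 2) := by rw [Finset.sum_mul]
        _ = (∑ i, ∑ j, V i j ^ 2) * (∑ i, x i ^ 2) := by rw [Finset.sum_comm]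
    calc (reluLayer U V x k)^2
        ≤ (∑ j, U k j ^ 2) * (∑ j, (max (∑ i, V i j * x i) 0)^2) := h1
      _ ≤ (∑ j, U k j ^ 2) * ((∑ i, ∑ j, V i j ^ 2) * (∑ i, x i ^ 2)) := by
          refine mul_le_mul_of_nonneg_left h2 ?_
          exact Finset.sum_nonneg fun j _ => sq_nonneg _
  calc ∑ k, (reluLayer U V x k)^2
      ≤ ∑ k, (∑ j, U k j ^ 2) * ((∑ i, ∑ j, V i j ^ 2) * (∑ i, x i ^ 2)) :=
        Finset.sum_le_sum fun k _ => hstep k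
    _ = (∑ k, ∑ j, U k j ^ 2) * (∑ i, ∑ j, V i j ^ 2) * (∑ i, x i ^ 2) := by
        rw [← Finset.sum_mul, ← mul_assoc]

lemma abs_sum_mul_le {m : ℕ} (a b : Fin m → ℝ) :
    |∑ k, a k * b k| ≤ Real.sqrt (∑ k, a k ^ 2) * Real.sqrt (∑ k, b k ^ 2) := by
  have h1 := Finset.sum_mul_sq_le_sq_mul_sq Finset.univ a b
  have h2 : |∑ k, a k * b k| = Real.sqrt ((∑ k, a k * b k)^2) := (Real.sqrt_sq_eq_abs _).symm
  rw [h2, ← Real.sqrt_mul (Finset.sum_nonneg fun k _ => sq_nonneg _)]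
  exact Real.sqrt_le_sqrt h1

lemma sqrt_sum_sub_sq_le {m : ℕ} (a b : Fin m → ℝ) :
    Real.sqrt (∑ k, (a k - b k)^2)
      ≤ Real.sqrt (∑ k, a k ^ 2) + Real.sqrt (∑ k, b k ^ 2) := by
  have ha : (0:ℝ) ≤ ∑ k, a k ^ 2 := Finset.sum_nonneg fun k _ => sq_nonneg _
  have hb : (0:ℝ) ≤ ∑ k, b k ^ 2 := Finset.sum_nonneg fun k _ => sq_nonneg _
  have hcs := abs_sum_mul_le a b
  have hexp : ∑ k, (a k - b k)^2
      = ∑ k, a k ^ 2 - 2 * ∑ k, a k * b k + ∑ k, b k ^ 2 := by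
    rw [Finset.mul_sum, ← Finset.sum_sub_distrib, ← Finset.sum_add_distrib]
    exact Finset.sum_congr rfl fun k _ => by ring
  have hS : ∑ k, (a k - b k)^2
      ≤ (Real.sqrt (∑ k, a k ^ 2) + Real.sqrt (∑ k, b k ^ 2))^2 := by
    have hsa := Real.sq_sqrt ha
    have hsb := Real.sq_sqrt hb
    have habs := abs_le.mp hcs
    nlinarith [habs.1, habs.2]
  calc Real.sqrt (∑ k, (a k - b k)^2)
      ≤ Real.sqrt ((Real.sqrt (∑ k, a k ^ 2) + Real.sqrt (∑ k, b k ^ 2))^2) :=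
        Real.sqrt_le_sqrt hS
    _ = Real.sqrt (∑ k, a k ^ 2) + Real.sqrt (∑ k, b k ^ 2) :=
        Real.sqrt_sq (by positivity)

lemma reluLayer_diff_sqrt_bound {m n r : ℕ} (U₁ U₂ : Fin m → Fin r → ℝ)
    (V₁ V₂ : Fin n → Fin r → ℝ) (x : Fin n → ℝ) :
    Real.sqrt (∑ k, (reluLayer U₁ V₁ x k - reluLayer U₂ V₂ x k)^2)
      ≤ (frobNorm U₁ * frobNorm V₁ + frobNorm U₂ * frobNorm V₂)
        * Real.sqrt (∑ i, x i ^ 2) := by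
  have hx : (0:ℝ) ≤ ∑ i, x i ^ 2 := Finset.sum_nonneg fun i _ => sq_nonneg _
  have key : ∀ (U : Fin m → Fin r → ℝ) (V : Fin n → Fin r → ℝ),
      Real.sqrt (∑ k, (reluLayer U V x k)^2)
        ≤ frobNorm U * frobNorm V * Real.sqrt (∑ i, x i ^ 2) := by
    intro U V
    refine (Real.sqrt_le_sqrt (reluLayer_sq_bound U V x)).trans ?_
    rw [show (frobNorm U)^2 * (frobNorm V)^2 * (∑ i, x i ^ 2)
        = (frobNorm U * frobNorm V * Real.sqrt (∑ i, x i ^ 2))^2 by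
      rw [mul_pow, mul_pow, Real.sq_sqrt hx]]
    rw [Real.sqrt_sq (by
      have := frobNorm_nonneg U; have := frobNorm_nonneg V
      positivity)]
  refine (sqrt_sum_sub_sq_le _ _).trans ?_
  have := add_le_add (key U₁ V₁) (key U₂ V₂)
  calc Real.sqrt (∑ k, (reluLayer U₁ V₁ x k)^2) + Real.sqrt (∑ k, (reluLayer U₂ V₂ x k)^2)
      ≤ frobNorm U₁ * frobNorm V₁ * Real.sqrt (∑ i, x i ^ 2)
        + frobNorm U₂ * frobNorm V₂ * Real.sqrt (∑ i, x i ^ 2) := this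
    _ = (frobNorm U₁ * frobNorm V₁ + frobNorm U₂ * frobNorm V₂)
        * Real.sqrt (∑ i, x i ^ 2) := by ring

lemma inner_prod_bound {m n r r' : ℕ} (U₁ U₂ : Fin m → Fin r → ℝ)
    (V₁ V₂ : Fin n → Fin r → ℝ) (U₁' U₂' : Fin m → Fin r' → ℝ)
    (V₁' V₂' : Fin n → Fin r' → ℝ) (x : Fin n → ℝ) :
    |∑ k, (reluLayer U₁ V₁ x k - reluLayer U₂ V₂ x k) *
        (reluLayer U₁' V₁' x k - reluLayer U₂' V₂' x k)|
      ≤ (frobNorm U₁ * frobNorm V₁ + frobNorm U₂ * frobNorm V₂)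
        * (frobNorm U₁' * frobNorm V₁' + frobNorm U₂' * frobNorm V₂')
        * (∑ i, x i ^ 2) := by
  have hx : (0:ℝ) ≤ ∑ i, x i ^ 2 := Finset.sum_nonneg fun i _ => sq_nonneg _
  have hA : (0:ℝ) ≤ frobNorm U₁ * frobNorm V₁ + frobNorm U₂ * frobNorm V₂ := by
    have := frobNorm_nonneg U₁; have := frobNorm_nonneg V₁
    have := frobNorm_nonneg U₂; have := frobNorm_nonneg V₂
    positivity
  refine (abs_sum_mul_le _ _).trans ?_
  have h1 := reluLayer_diff_sqrt_bound U₁ U₂ V₁ V₂ x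
  have h2 := reluLayer_diff_sqrt_bound U₁' U₂' V₁' V₂' x
  calc Real.sqrt (∑ k, (reluLayer U₁ V₁ x k - reluLayer U₂ V₂ x k)^2)
        * Real.sqrt (∑ k, (reluLayer U₁' V₁' x k - reluLayer U₂' V₂' x k)^2)
      ≤ ((frobNorm U₁ * frobNorm V₁ + frobNorm U₂ * frobNorm V₂)
          * Real.sqrt (∑ i, x i ^ 2))
        * ((frobNorm U₁' * frobNorm V₁' + frobNorm U₂' * frobNorm V₂')
          * Real.sqrt (∑ i, x i ^ 2)) :=
        mul_le_mul h1 h2 (Real.sqrt_nonneg _) (by positivity)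
    _ = (frobNorm U₁ * frobNorm V₁ + frobNorm U₂ * frobNorm V₂)
        * (frobNorm U₁' * frobNorm V₁' + frobNorm U₂' * frobNorm V₂')
        * (Real.sqrt (∑ i, x i ^ 2) * Real.sqrt (∑ i, x i ^ 2)) := by ring
    _ = _ := by rw [Real.mul_self_sqrt hx]

lemma pointwise_bound {n m r r' : ℕ} {g : ℝ} (hg : 1 ≤ g)
    (U₁ U₂ : Fin m → Fin r → ℝ) (V₁ V₂ : Fin n → Fin r → ℝ)
    (U₁' U₂' : Fin m → Fin r' → ℝ) (V₁' V₂' : Fin n → Fin r' → ℝ) (x : Fin n → ℝ) :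
    |(∑ k, (reluLayer U₁ V₁ (ballProj g x) k - reluLayer U₂ V₂ (ballProj g x) k) *
            (reluLayer U₁' V₁' (ballProj g x) k - reluLayer U₂' V₂' (ballProj g x) k))
        - ∑ k, (reluLayer U₁ V₁ x k - reluLayer U₂ V₂ x k) *
            (reluLayer U₁' V₁' x k - reluLayer U₂' V₂' x k)|
      ≤ (frobNorm U₁ * frobNorm V₁ + frobNorm U₂ * frobNorm V₂)
        * (frobNorm U₁' * frobNorm V₁' + frobNorm U₂' * frobNorm V₂')
        * max ((∑ i, x i ^ 2) - g^2) 0 := by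
  have hA : (0:ℝ) ≤ frobNorm U₁ * frobNorm V₁ + frobNorm U₂ * frobNorm V₂ := by
    have := frobNorm_nonneg U₁; have := frobNorm_nonneg V₁
    have := frobNorm_nonneg U₂; have := frobNorm_nonneg V₂
    positivity
  have hB : (0:ℝ) ≤ frobNorm U₁' * frobNorm V₁' + frobNorm U₂' * frobNorm V₂' := by
    have := frobNorm_nonneg U₁'; have := frobNorm_nonneg V₁'
    have := frobNorm_nonneg U₂'; have := frobNorm_nonneg V₂'
    positivity
  have hx : (0:ℝ) ≤ ∑ i, x i ^ 2 := Finset.sum_nonneg fun i _ => sq_nonneg _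
  by_cases hcase : euclNorm x ≤ g
  · rw [show ballProj g x = x from if_pos hcase]
    simp only [sub_self, abs_zero]
    positivity
  · push_neg at hcase
    have hg0 : (0:ℝ) < g := lt_of_lt_of_le one_pos hg
    have hN0 : (0:ℝ) < euclNorm x := lt_trans hg0 hcase
    have hN2 : euclNorm x ^ 2 = ∑ i, x i ^ 2 := Real.sq_sqrt hx
    set c : ℝ := g / euclNorm x with hc
    have hc0 : 0 < c := div_pos hg0 hN0
    have hc1 : c < 1 := (div_lt_one hN0).mpr hcase
    have hproj : ballProj g x = fun i => c * x i := by
      rw [ballProj, if_neg (not_le.mpr hcase)]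
      rfl
    have hrl : ∀ {r₀ : ℕ} (U : Fin m → Fin r₀ → ℝ) (V : Fin n → Fin r₀ → ℝ) (k : Fin m),
        reluLayer U V (ballProj g x) k = c * reluLayer U V x k := by
      intro r₀ U V k
      rw [hproj]
      exact reluLayer_smul U V x hc0.le k
    have hsum : (∑ k, (reluLayer U₁ V₁ (ballProj g x) k - reluLayer U₂ V₂ (ballProj g x) k) *
            (reluLayer U₁' V₁' (ballProj g x) k - reluLayer U₂' V₂' (ballProj g x) k))
        = c^2 * ∑ k, (reluLayer U₁ V₁ x k - reluLayer U₂ V₂ x k) *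
            (reluLayer U₁' V₁' x k - reluLayer U₂' V₂' x k) := by
      rw [Finset.mul_sum]
      refine Finset.sum_congr rfl fun k _ => ?_
      rw [hrl U₁ V₁ k, hrl U₂ V₂ k, hrl U₁' V₁' k, hrl U₂' V₂' k]
      ring
    rw [hsum]
    set S := ∑ k, (reluLayer U₁ V₁ x k - reluLayer U₂ V₂ x k) *
        (reluLayer U₁' V₁' x k - reluLayer U₂' V₂' x k) with hSdef
    have habs : |c^2 * S - S| = (1 - c^2) * |S| := by
      rw [show c^2 * S - S = -((1 - c^2) * S) by ring, abs_neg, abs_mul,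
        abs_of_nonneg (by nlinarith : (0:ℝ) ≤ 1 - c^2)]
    rw [habs]
    have hSb := inner_prod_bound U₁ U₂ V₁ V₂ U₁' U₂' V₁' V₂' x
    have hc2 : c^2 * (∑ i, x i ^ 2) = g^2 := by
      rw [hc, div_pow, ← hN2]
      field_simp
    have hmax : max ((∑ i, x i ^ 2) - g^2) 0 = (∑ i, x i ^ 2) - g^2 := by
      refine max_eq_left ?_
      have : g^2 < euclNorm x ^ 2 := by nlinarith
      rw [hN2] at this
      linarith
    rw [hmax]
    calc (1 - c^2) * |S|
        ≤ (1 - c^2) * ((frobNorm U₁ * frobNorm V₁ + frobNorm U₂ * frobNorm V₂)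
          * (frobNorm U₁' * frobNorm V₁' + frobNorm U₂' * frobNorm V₂') * (∑ i, x i ^ 2)) :=
          mul_le_mul_of_nonneg_left hSb (by nlinarith)
      _ = (frobNorm U₁ * frobNorm V₁ + frobNorm U₂ * frobNorm V₂)
          * (frobNorm U₁' * frobNorm V₁' + frobNorm U₂' * frobNorm V₂')
          * ((∑ i, x i ^ 2) - c^2 * (∑ i, x i ^ 2)) := by ring
      _ = _ := by rw [hc2]

end Aux

open Real in
/-- ReLU projection lemma 2 (multiplicative form). -/
theorem relu_projection_two
    (n : ℕ) (hn : 1 ≤ n) (g : ℝ) (hg : 1 ≤ g)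
    (m r r' : ℕ) (hm : 1 ≤ m) (hr : 1 ≤ r) (hr' : 1 ≤ r')
    (U₁ U₂ : Fin m → Fin r → ℝ) (V₁ V₂ : Fin n → Fin r → ℝ)
    (U₁' U₂' : Fin m → Fin r' → ℝ) (V₁' V₂' : Fin n → Fin r' → ℝ) :
    |∫ x, ((∑ k, (reluLayer U₁ V₁ (ballProj g x) k
              - reluLayer U₂ V₂ (ballProj g x) k) *
            (reluLayer U₁' V₁' (ballProj g x) k
              - reluLayer U₂' V₂' (ballProj g x) k))
        - ∑ k, (reluLayer U₁ V₁ x k - reluLayer U₂ V₂ x k) *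
            (reluLayer U₁' V₁' x k - reluLayer U₂' V₂' x k)) ∂(gaussianVec n)| ≤
      g * Real.exp (-g ^ 2 / 2) *
        (frobNorm U₁ * frobNorm V₁ + frobNorm U₂ * frobNorm V₂) *
        (frobNorm U₁' * frobNorm V₁' + frobNorm U₂' * frobNorm V₂') := by
  have hn0 : (0:ℝ) < n := by exact_mod_cast hn
  have hA : (0:ℝ) ≤ frobNorm U₁ * frobNorm V₁ + frobNorm U₂ * frobNorm V₂ := by
    have := frobNorm_nonneg U₁; have := frobNorm_nonneg V₁
    have := frobNorm_nonneg U₂; have := frobNorm_nonneg V₂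
    positivity
  have hB : (0:ℝ) ≤ frobNorm U₁' * frobNorm V₁' + frobNorm U₂' * frobNorm V₂' := by
    have := frobNorm_nonneg U₁'; have := frobNorm_nonneg V₁'
    have := frobNorm_nonneg U₂'; have := frobNorm_nonneg V₂'
    positivity
  have hge : (0:ℝ) ≤ g * Real.exp (-g^2/2) := by positivity
  have hmeas1d : Measurable fun t : ℝ => max ((n:ℝ) * t^2 - g^2) 0 := by fun_prop
  have hsum_int : Integrable
      (fun x : Fin n → ℝ => ∑ i, max ((n:ℝ) * x i ^ 2 - g^2) 0) (gaussianVec n) := by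
    unfold gaussianVec
    exact integrable_finset_sum _ fun i _ =>
      integrable_eval _ i (fun t => max ((n:ℝ) * t^2 - g^2) 0) (one_dim_n_integrable hn g)
  have hmeas_max : Measurable
      (fun x : Fin n → ℝ => max ((∑ i, x i ^ 2) - g^2) 0) := by
    have hs : Measurable fun x : Fin n → ℝ => ∑ i, x i ^ 2 :=
      Finset.measurable_sum _ fun i _ => (measurable_pi_apply i).pow_const 2
    exact (hs.sub_const _).max measurable_const
  have hptw : ∀ x : Fin n → ℝ, max ((∑ i, x i ^ 2) - g^2) 0
      ≤ (n:ℝ)⁻¹ * ∑ i, max ((n:ℝ) * x i ^ 2 - g^2) 0 := by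
    intro x
    have h3 : (0:ℝ) ≤ (n:ℝ)⁻¹ * ∑ i, max ((n:ℝ) * x i ^ 2 - g^2) 0 := by
      have : (0:ℝ) ≤ ∑ i, max ((n:ℝ) * x i ^ 2 - g^2) 0 :=
        Finset.sum_nonneg fun i _ => le_max_right _ _
      positivity
    refine max_le ?_ h3
    have h1 : (∑ i, x i ^ 2) - g^2 = (n:ℝ)⁻¹ * ∑ i, ((n:ℝ) * x i ^ 2 - g^2) := by
      rw [Finset.sum_sub_distrib, Finset.sum_const, Finset.card_univ, Fintype.card_fin,
        ← Finset.mul_sum]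
      push_cast
      field_simp
      ring
    have h2 : ∑ i, ((n:ℝ) * x i ^ 2 - g^2) ≤ ∑ i, max ((n:ℝ) * x i ^ 2 - g^2) 0 :=
      Finset.sum_le_sum fun i _ => le_max_left _ _
    rw [h1]
    exact mul_le_mul_of_nonneg_left h2 (by positivity)
  have hbound_int : Integrable
      (fun x : Fin n → ℝ => (n:ℝ)⁻¹ * ∑ i, max ((n:ℝ) * x i ^ 2 - g^2) 0) (gaussianVec n) :=
    hsum_int.const_mul _
  have hmax_int : Integrable
      (fun x : Fin n → ℝ => max ((∑ i, x i ^ 2) - g^2) 0) (gaussianVec n) := by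
    refine hbound_int.mono' hmeas_max.aestronglyMeasurable ?_
    refine Filter.Eventually.of_forall fun x => ?_
    rw [Real.norm_eq_abs, abs_of_nonneg (le_max_right _ _)]
    exact hptw x
  have hGint : Integrable
      (fun x : Fin n → ℝ => (frobNorm U₁ * frobNorm V₁ + frobNorm U₂ * frobNorm V₂)
        * (frobNorm U₁' * frobNorm V₁' + frobNorm U₂' * frobNorm V₂')
        * max ((∑ i, x i ^ 2) - g^2) 0) (gaussianVec n) :=
    hmax_int.const_mul _
  have h1 : |∫ x, ((∑ k, (reluLayer U₁ V₁ (ballProj g x) k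
              - reluLayer U₂ V₂ (ballProj g x) k) *
            (reluLayer U₁' V₁' (ballProj g x) k
              - reluLayer U₂' V₂' (ballProj g x) k))
        - ∑ k, (reluLayer U₁ V₁ x k - reluLayer U₂ V₂ x k) *
            (reluLayer U₁' V₁' x k - reluLayer U₂' V₂' x k)) ∂(gaussianVec n)|
      ≤ ∫ x, (frobNorm U₁ * frobNorm V₁ + frobNorm U₂ * frobNorm V₂)
        * (frobNorm U₁' * frobNorm V₁' + frobNorm U₂' * frobNorm V₂')
        * max ((∑ i, x i ^ 2) - g^2) 0 ∂(gaussianVec n) := by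
    rw [← Real.norm_eq_abs]
    refine norm_integral_le_of_norm_le hGint (Filter.Eventually.of_forall fun x => ?_)
    rw [Real.norm_eq_abs]
    exact pointwise_bound hg U₁ U₂ V₁ V₂ U₁' U₂' V₁' V₂' x
  have h2 : ∫ x, (frobNorm U₁ * frobNorm V₁ + frobNorm U₂ * frobNorm V₂)
        * (frobNorm U₁' * frobNorm V₁' + frobNorm U₂' * frobNorm V₂')
        * max ((∑ i, x i ^ 2) - g^2) 0 ∂(gaussianVec n)
      = (frobNorm U₁ * frobNorm V₁ + frobNorm U₂ * frobNorm V₂)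
        * (frobNorm U₁' * frobNorm V₁' + frobNorm U₂' * frobNorm V₂')
        * ∫ x, max ((∑ i, x i ^ 2) - g^2) 0 ∂(gaussianVec n) := by
    rw [integral_const_mul]
  have h3 : ∫ x, max ((∑ i, x i ^ 2) - g^2) 0 ∂(gaussianVec n)
      ≤ g * Real.exp (-g^2/2) := by
    have hb : ∫ x, max ((∑ i, x i ^ 2) - g^2) 0 ∂(gaussianVec n)
        ≤ ∫ x, (n:ℝ)⁻¹ * ∑ i, max ((n:ℝ) * x i ^ 2 - g^2) 0 ∂(gaussianVec n) :=
      integral_mono_of_nonneg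
        (Filter.Eventually.of_forall fun x => le_max_right _ _)
        hbound_int (Filter.Eventually.of_forall hptw)
    refine hb.trans ?_
    rw [integral_const_mul]
    have heq : ∫ x, (∑ i, max ((n:ℝ) * x i ^ 2 - g^2) 0) ∂(gaussianVec n)
        = ∑ i : Fin n, ∫ t, max ((n:ℝ) * t ^ 2 - g^2) 0 ∂(gaussianReal 0 (n:NNReal)⁻¹) := by
      unfold gaussianVec
      rw [integral_finset_sum _ (fun i _ =>
        integrable_eval _ i _ (one_dim_n_integrable hn g))]
      exact Finset.sum_congr rfl fun i _ =>
        integral_eval _ i _ hmeas1d.aestronglyMeasurable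
    rw [heq]
    have hle : ∑ i : Fin n, ∫ t, max ((n:ℝ) * t ^ 2 - g^2) 0 ∂(gaussianReal 0 (n:NNReal)⁻¹)
        ≤ ∑ i : Fin n, g * Real.exp (-g^2/2) :=
      Finset.sum_le_sum fun i _ => one_dim_n_bound hn hg
    rw [Finset.sum_const, Finset.card_univ, Fintype.card_fin] at hle
    calc (n:ℝ)⁻¹ * ∑ i : Fin n, ∫ t, max ((n:ℝ) * t ^ 2 - g^2) 0
            ∂(gaussianReal 0 (n:NNReal)⁻¹)
        ≤ (n:ℝ)⁻¹ * ((n:ℝ) * (g * Real.exp (-g^2/2))) := by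
          refine mul_le_mul_of_nonneg_left ?_ (by positivity)
          simpa [nsmul_eq_mul] using hle
      _ = g * Real.exp (-g^2/2) := by field_simp
  have hfinal := h1.trans (le_of_eq h2)
  have h4 := mul_le_mul_of_nonneg_left h3 (mul_nonneg hA hB)
  calc |∫ x, ((∑ k, (reluLayer U₁ V₁ (ballProj g x) k
              - reluLayer U₂ V₂ (ballProj g x) k) *
            (reluLayer U₁' V₁' (ballProj g x) k
              - reluLayer U₂' V₂' (ballProj g x) k))
        - ∑ k, (reluLayer U₁ V₁ x k - reluLayer U₂ V₂ x k) *
            (reluLayer U₁' V₁' x k - reluLayer U₂' V₂' x k)) ∂(gaussianVec n)|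
      ≤ (frobNorm U₁ * frobNorm V₁ + frobNorm U₂ * frobNorm V₂)
        * (frobNorm U₁' * frobNorm V₁' + frobNorm U₂' * frobNorm V₂')
        * ∫ x, max ((∑ i, x i ^ 2) - g^2) 0 ∂(gaussianVec n) := hfinal
    _ ≤ (frobNorm U₁ * frobNorm V₁ + frobNorm U₂ * frobNorm V₂)
        * (frobNorm U₁' * frobNorm V₁' + frobNorm U₂' * frobNorm V₂')
        * (g * Real.exp (-g^2/2)) := by
          rw [mul_assoc] at h4 ⊢
          exact h4
    _ = g * Real.exp (-g ^ 2 / 2) *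
        (frobNorm U₁ * frobNorm V₁ + frobNorm U₂ * frobNorm V₂) *
        (frobNorm U₁' * frobNorm V₁' + frobNorm U₂' * frobNorm V₂') := by ring
end
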